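/- arXiv:2408.01409 — 7 statements merged into one kernel-verified Lean document; each statement's English description precedes it below -/
import Mathlib

section
/- Let A ∈ ℝ^{d×d} have (complex) eigenvalues λ_1,…,λ_d, all with Re(λ_i) < 0, and let h > 0 satisfy h·Im(λ_i)² < −Re(λ_i) for every i = 1,…,d. Then every complex eigenvalue of the block matrix B = [[0, A],[h⁻¹ I_d, −h⁻¹ I_d]] ∈ ℝ^{2d×2d} has strictly negative real part; consequently there exist constants c > 0 and C > 0 such that ‖exp(tB)(u_0, u_0)ᵀ‖ ≤ C·exp(−c t)·‖u_0‖ for all t ≥ 0 and all u_0 ∈ ℝ^d. -/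
open Matrix

/-- `μ ∈ ℂ` is an eigenvalue of (the complexification of) the real matrix `M`. -/
def Matrix.IsEigenvalueC {n : Type*} [Fintype n] (M : Matrix n n ℝ) (μ : ℂ) : Prop :=
  ∃ v : n → ℂ, v ≠ 0 ∧ (M.map fun x => (x : ℂ)).mulVec v = μ • v

/-- The block matrix `B = [[0, A], [h⁻¹ I, −h⁻¹ I]]` of the deterministic Euler dynamics. -/
noncomputable def eulerBlock {d : ℕ} (A : Matrix (Fin d) (Fin d) ℝ) (h : ℝ) :
    Matrix (Fin d ⊕ Fin d) (Fin d ⊕ Fin d) ℝ :=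
  Matrix.fromBlocks 0 A (h⁻¹ • 1) (-(h⁻¹ • (1 : Matrix (Fin d) (Fin d) ℝ)))

/-- The Euclidean norm of a vector in `ℝ^n`. -/
noncomputable def eucNorm {n : Type*} [Fintype n] (x : n → ℝ) : ℝ :=
  ‖(WithLp.equiv 2 (n → ℝ)).symm x‖

namespace EulerDecayAux

open NormedSpace Nat

set_option linter.unusedSectionVars false
set_option linter.unusedVariables false

section EigPart

lemma key_ineq {h : ℝ} (hh : 0 < h) {μ : ℂ}
    (h1 : (μ + h * μ ^ 2).re < 0) (h2 : h * (μ + h * μ ^ 2).im ^ 2 < -(μ + h * μ ^ 2).re) :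
    μ.re < 0 := by
  by_contra hx
  push_neg at hx
  simp only [Complex.add_re, Complex.add_im, Complex.mul_re, Complex.mul_im, pow_two,
    Complex.ofReal_re, Complex.ofReal_im] at h1 h2
  set x := μ.re
  set y := μ.im
  nlinarith [mul_nonneg (mul_nonneg (mul_nonneg hh.le hh.le) hx) (sq_nonneg y),
    mul_nonneg (mul_nonneg (mul_nonneg (mul_nonneg hh.le hh.le) hh.le) (mul_nonneg hx hx)) (sq_nonneg y),
    mul_nonneg hh.le (mul_nonneg hx hx), hx, hh.le]

lemma euler_eig {d : ℕ} {A : Matrix (Fin d) (Fin d) ℝ} {h : ℝ} (hh : 0 < h) {μ : ℂ}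
    (hμ : (eulerBlock A h).IsEigenvalueC μ) : A.IsEigenvalueC (μ + h * μ ^ 2) := by
  obtain ⟨v, hv0, hv⟩ := hμ
  set v1 : Fin d → ℂ := v ∘ Sum.inl
  set v2 : Fin d → ℂ := v ∘ Sum.inr
  have hmap : ((eulerBlock A h).map fun x => (x : ℂ)) =
      Matrix.fromBlocks 0 (A.map fun x => (x : ℂ)) (((h : ℂ))⁻¹ • 1)
        (-(((h : ℂ))⁻¹ • (1 : Matrix (Fin d) (Fin d) ℂ))) := by
    ext i j
    rcases i with i | i <;> rcases j with j | j
    · simp [eulerBlock]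
    · simp [eulerBlock]
    · by_cases hij : i = j <;> simp [eulerBlock, Matrix.one_apply, hij]
    · by_cases hij : i = j <;> simp [eulerBlock, Matrix.one_apply, hij]
  have hve : v = Sum.elim v1 v2 := by
    funext i; rcases i with i | i <;> rfl
  rw [hmap, hve, Matrix.fromBlocks_mulVec] at hv
  have htop : ∀ i, (A.map fun x => (x : ℂ)).mulVec v2 i = μ * v1 i := by
    intro i
    have := congrFun hv (Sum.inl i)
    simpa [Matrix.zero_mulVec] using this
  have hbot : ∀ i, (h : ℂ)⁻¹ * v1 i - (h : ℂ)⁻¹ * v2 i = μ * v2 i := by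
    intro i
    have := congrFun hv (Sum.inr i)
    simpa [Matrix.neg_mulVec, Matrix.smul_mulVec, Matrix.one_mulVec, sub_eq_add_neg]
      using this
  have hcne : (h : ℂ) ≠ 0 := by exact_mod_cast hh.ne'
  have hv1 : ∀ i, v1 i = (1 + h * μ) * v2 i := by
    intro i
    have h3 := hbot i
    field_simp at h3 ⊢
    linear_combination h3
  refine ⟨v2, ?_, ?_⟩
  · intro h2
    apply hv0
    rw [hve]
    have : v1 = 0 := by
      funext i; rw [hv1 i]; simp [congrFun h2 i]
    simp [this, h2]
  · funext i
    have h4 := htop i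
    rw [hv1 i] at h4
    simp only [Pi.smul_apply, smul_eq_mul]
    rw [h4]; ring

end EigPart

variable {N : Type*} [Fintype N] [DecidableEq N]


/-- `mulVec` with fixed vector, as a linear map in the matrix. -/
noncomputable def mulVecL (w : N → ℂ) : Matrix N N ℂ →ₗ[ℂ] (N → ℂ) where
  toFun M := M.mulVec w
  map_add' M P := Matrix.add_mulVec M P w
  map_smul' c M := Matrix.smul_mulVec c M w

lemma exp_mulVec_eq_sum (M : Matrix N N ℂ) (w : N → ℂ) (k : ℕ)
    (hw : ∀ j, k ≤ j → (M ^ j).mulVec w = 0) (t : ℝ) :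
    (exp ((t : ℂ) • M)).mulVec w
      = ∑ j ∈ Finset.range k, (((j ! : ℂ))⁻¹ * (t : ℂ) ^ j) • (M ^ j).mulVec w := by
  letI : SeminormedRing (Matrix N N ℂ) := Matrix.linftyOpSemiNormedRing
  letI : NormedRing (Matrix N N ℂ) := Matrix.linftyOpNormedRing
  letI : NormedAlgebra ℂ (Matrix N N ℂ) := Matrix.linftyOpNormedAlgebra
  have hL : Continuous (mulVecL (N := N) w) := LinearMap.continuous_of_finiteDimensional _
  have hsum : Summable fun j : ℕ => ((j ! : ℂ))⁻¹ • ((t : ℂ) • M) ^ j :=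
    expSeries_summable' ((t : ℂ) • M)
  have h1 : (exp ((t : ℂ) • M)).mulVec w
      = ∑' j : ℕ, mulVecL w (((j ! : ℂ))⁻¹ • ((t : ℂ) • M) ^ j) := by
    rw [exp_eq_tsum ℂ]
    exact (hsum.hasSum.map (mulVecL (N := N) w) hL).tsum_eq.symm
  rw [h1]
  have h2 : ∀ j : ℕ, mulVecL w (((j ! : ℂ))⁻¹ • ((t : ℂ) • M) ^ j)
      = (((j ! : ℂ))⁻¹ * (t : ℂ) ^ j) • (M ^ j).mulVec w := by
    intro j
    rw [smul_pow, smul_smul]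
    simp [mulVecL]
  simp_rw [h2]
  refine tsum_eq_sum ?_
  intro j hj
  rw [hw j (by simpa using hj)]
  simp

lemma exp_smul_split (M : Matrix N N ℂ) (μ : ℂ) (t : ℝ) :
    exp ((t : ℂ) • M)
      = Complex.exp ((t : ℂ) * μ) • exp ((t : ℂ) • (M - μ • 1)) := by
  letI : SeminormedRing (Matrix N N ℂ) := Matrix.linftyOpSemiNormedRing
  letI : NormedRing (Matrix N N ℂ) := Matrix.linftyOpNormedRing
  letI : NormedAlgebra ℂ (Matrix N N ℂ) := Matrix.linftyOpNormedAlgebra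
  have hsplit : (t : ℂ) • M = ((t : ℂ) * μ) • (1 : Matrix N N ℂ) + (t : ℂ) • (M - μ • 1) := by
    rw [smul_sub, smul_smul]
    abel
  rw [hsplit, Matrix.exp_add_of_commute _ _ (((Commute.one_left (M - μ • 1))).smul_left _ |>.smul_right _)]
  have h1 : exp (((t : ℂ) * μ) • (1 : Matrix N N ℂ)) = Complex.exp ((t : ℂ) * μ) • 1 := by
    rw [← Algebra.algebraMap_eq_smul_one]
    erw [← algebraMap_exp_comm]
    rw [Complex.exp_eq_exp_ℂ, Algebra.algebraMap_eq_smul_one]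
  rw [h1, smul_mul_assoc, one_mul]

lemma pow_div_factorial_le (x : ℝ) (hx : 0 ≤ x) (j : ℕ) :
    x ^ j / j ! ≤ Real.exp x := by
  have h1 : x ^ j / j ! ≤ ∑ i ∈ Finset.range (j + 1), x ^ i / i ! := by
    refine Finset.single_le_sum (f := fun i => x ^ i / (i ! : ℝ)) ?_ ?_
    · intro i _; positivity
    · simp
  exact h1.trans (Real.sum_le_exp_of_nonneg hx _)

lemma decay_genEig (M : Matrix N N ℂ) {μ : ℂ} {a : ℝ} (ha : 0 < a) (hμ : μ.re ≤ -a)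
    (w : N → ℂ) (k : ℕ) (hk : ((M - μ • 1) ^ k).mulVec w = 0) :
    ∃ Cw : ℝ, 0 ≤ Cw ∧ ∀ t : ℝ, 0 ≤ t →
      ‖(exp ((t : ℂ) • M)).mulVec w‖ ≤ Cw * Real.exp (-(a / 2) * t) := by
  set P := M - μ • 1 with hP
  have hw : ∀ j, k ≤ j → (P ^ j).mulVec w = 0 := by
    intro j hj
    have hpow : P ^ j = P ^ (j - k) * P ^ k := by rw [← pow_add]; congr 1; omega
    rw [hpow, ← Matrix.mulVec_mulVec, hk, Matrix.mulVec_zero]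
  refine ⟨∑ j ∈ Finset.range k, (2 / a) ^ j * ‖(P ^ j).mulVec w‖, by positivity, ?_⟩
  intro t ht
  rw [exp_smul_split M μ t, Matrix.smul_mulVec, norm_smul, exp_mulVec_eq_sum P w k hw t]
  have habs : ‖Complex.exp ((t : ℂ) * μ)‖ ≤ Real.exp (-a * t) := by
    rw [Complex.norm_exp]
    apply Real.exp_le_exp.2
    have : ((t : ℂ) * μ).re = t * μ.re := by simp [Complex.mul_re]
    rw [this]
    nlinarith
  have hsum : ‖∑ j ∈ Finset.range k, (((j ! : ℂ))⁻¹ * (t : ℂ) ^ j) • (P ^ j).mulVec w‖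
      ≤ Real.exp (a / 2 * t) * ∑ j ∈ Finset.range k, (2 / a) ^ j * ‖(P ^ j).mulVec w‖ := by
    calc ‖∑ j ∈ Finset.range k, (((j ! : ℂ))⁻¹ * (t : ℂ) ^ j) • (P ^ j).mulVec w‖
        ≤ ∑ j ∈ Finset.range k, ‖(((j ! : ℂ))⁻¹ * (t : ℂ) ^ j) • (P ^ j).mulVec w‖ :=
          norm_sum_le _ _
      _ ≤ ∑ j ∈ Finset.range k,
            Real.exp (a / 2 * t) * ((2 / a) ^ j * ‖(P ^ j).mulVec w‖) := by
          apply Finset.sum_le_sum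
          intro j _
          rw [norm_smul]
          have h1 : ‖((j ! : ℂ))⁻¹ * (t : ℂ) ^ j‖ = t ^ j / j ! := by
            rw [norm_mul, norm_inv, norm_pow, Complex.norm_real, Real.norm_eq_abs,
              abs_of_nonneg ht]
            have : ‖((j ! : ℕ) : ℂ)‖ = (j ! : ℝ) := by
              rw [Complex.norm_natCast]
            rw [this, div_eq_mul_inv, mul_comm]
          rw [h1]
          have h2 : t ^ j / j ! ≤ Real.exp (a / 2 * t) * (2 / a) ^ j := by
            have h3 := pow_div_factorial_le (a / 2 * t) (by positivity) j
            have h4 : (a / 2 * t) ^ j = (a / 2) ^ j * t ^ j := by rw [mul_pow]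
            rw [h4] at h3
            have h5 : (0 : ℝ) < (a / 2) ^ j := by positivity
            have h6 : t ^ j / j ! ≤ Real.exp (a / 2 * t) / (a / 2) ^ j := by
              rw [div_le_div_iff₀ (by positivity) h5]
              calc t ^ j * (a / 2) ^ j = (a / 2) ^ j * t ^ j / j ! * j ! := by
                    field_simp
                _ ≤ Real.exp (a / 2 * t) * j ! := by
                    apply mul_le_mul_of_nonneg_right h3 (by positivity)
            calc t ^ j / j ! ≤ Real.exp (a / 2 * t) / (a / 2) ^ j := h6
              _ = Real.exp (a / 2 * t) * (2 / a) ^ j := by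
                  rw [div_eq_mul_inv, ← inv_pow]
                  congr 2
                  field_simp
          calc t ^ j / j ! * ‖(P ^ j).mulVec w‖
              ≤ (Real.exp (a / 2 * t) * (2 / a) ^ j) * ‖(P ^ j).mulVec w‖ := by
                apply mul_le_mul_of_nonneg_right h2 (norm_nonneg _)
            _ = Real.exp (a / 2 * t) * ((2 / a) ^ j * ‖(P ^ j).mulVec w‖) := by ring
      _ = Real.exp (a / 2 * t) * ∑ j ∈ Finset.range k, (2 / a) ^ j * ‖(P ^ j).mulVec w‖ := by
          rw [Finset.mul_sum]
  calc ‖Complex.exp ((t : ℂ) * μ)‖ * ‖∑ j ∈ Finset.range k, (((j ! : ℂ))⁻¹ * (t : ℂ) ^ j) • (P ^ j).mulVec w‖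
      ≤ Real.exp (-a * t) * (Real.exp (a / 2 * t) * ∑ j ∈ Finset.range k, (2 / a) ^ j * ‖(P ^ j).mulVec w‖) := by
        apply mul_le_mul habs hsum (norm_nonneg _) (Real.exp_nonneg _)
    _ = (∑ j ∈ Finset.range k, (2 / a) ^ j * ‖(P ^ j).mulVec w‖) * Real.exp (-(a / 2) * t) := by
        rw [← mul_assoc, ← Real.exp_add]
        ring_nf


lemma matpow_mulVec (M : Matrix N N ℂ) (μ : ℂ) (k : ℕ) (x : N → ℂ) :
    ((M - μ • 1) ^ k).mulVec x
      = (((Matrix.mulVecLin M - μ • 1) : Module.End ℂ (N → ℂ)) ^ k) x := by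
  induction k generalizing x with
  | zero => simp
  | succ k ih =>
      rw [pow_succ, pow_succ, ← Matrix.mulVec_mulVec, Module.End.mul_apply]
      have hone : (M - μ • 1).mulVec x
          = ((Matrix.mulVecLin M - μ • 1) : Module.End ℂ (N → ℂ)) x := by
        simp [Matrix.sub_mulVec, Matrix.smul_mulVec, Matrix.one_mulVec]
      rw [← hone, ih]

lemma decay_pointwise (M : Matrix N N ℂ) {a : ℝ} (ha : 0 < a)
    (hspec : ∀ μ : ℂ, Module.End.HasEigenvalue (Matrix.mulVecLin M : Module.End ℂ (N → ℂ)) μ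
      → μ.re ≤ -a)
    (v : N → ℂ) :
    ∃ Cv : ℝ, 0 ≤ Cv ∧ ∀ t : ℝ, 0 ≤ t →
      ‖(exp ((t : ℂ) • M)).mulVec v‖ ≤ Cv * Real.exp (-(a / 2) * t) := by
  set f : Module.End ℂ (N → ℂ) := Matrix.mulVecLin M with hf
  have htop := Module.End.iSup_maxGenEigenspace_eq_top f
  have hv : v ∈ ⨆ μ : ℂ, f.maxGenEigenspace μ := by rw [htop]; trivial
  rw [Submodule.mem_iSup_iff_exists_finsupp] at hv
  obtain ⟨c, hcmem, hcsum⟩ := hv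
  have key : ∀ μ : ℂ, ∃ Cw : ℝ, 0 ≤ Cw ∧ ∀ t : ℝ, 0 ≤ t →
      ‖(exp ((t : ℂ) • M)).mulVec (c μ)‖ ≤ Cw * Real.exp (-(a / 2) * t) := by
    intro μ
    by_cases hc0 : c μ = 0
    · exact ⟨0, le_refl _, fun t ht => by simp [hc0, Matrix.mulVec_zero, Real.exp_nonneg]⟩
    · have hmem := hcmem μ
      have hμe : f.HasEigenvalue μ := by
        have hne : f.maxGenEigenspace μ ≠ ⊥ := by
          intro hbot
          exact hc0 (by simpa [hbot] using hmem)
        exact Module.End.HasUnifEigenvalue.lt zero_lt_one hne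
      obtain ⟨k, hk⟩ := (Module.End.mem_maxGenEigenspace f μ (c μ)).1 hmem
      have hkM : ((M - μ • 1) ^ k).mulVec (c μ) = 0 := by
        rw [matpow_mulVec]
        exact hk
      exact decay_genEig M ha (hspec μ hμe) (c μ) k hkM
  choose Cf hC0 hCb using key
  refine ⟨∑ μ ∈ c.support, Cf μ, Finset.sum_nonneg fun μ _ => hC0 μ, ?_⟩
  intro t ht
  have hvsum : v = ∑ μ ∈ c.support, c μ := by
    rw [← hcsum]; rfl
  have hmv : ∀ w : N → ℂ, (exp ((t : ℂ) • M)).mulVec w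
      = Matrix.mulVecLin (exp ((t : ℂ) • M)) w := fun _ => rfl
  have hsplit : (exp ((t : ℂ) • M)).mulVec v
      = ∑ μ ∈ c.support, (exp ((t : ℂ) • M)).mulVec (c μ) := by
    rw [hvsum]
    simp_rw [hmv]
    rw [map_sum]
  rw [hsplit]
  calc ‖∑ μ ∈ c.support, (exp ((t : ℂ) • M)).mulVec (c μ)‖
      ≤ ∑ μ ∈ c.support, ‖(exp ((t : ℂ) • M)).mulVec (c μ)‖ := norm_sum_le _ _
    _ ≤ ∑ μ ∈ c.support, Cf μ * Real.exp (-(a / 2) * t) :=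
        Finset.sum_le_sum fun μ _ => hCb μ t ht
    _ = (∑ μ ∈ c.support, Cf μ) * Real.exp (-(a / 2) * t) := by rw [Finset.sum_mul]

lemma decay_uniform (M : Matrix N N ℂ) {a : ℝ} (ha : 0 < a)
    (hspec : ∀ μ : ℂ, Module.End.HasEigenvalue (Matrix.mulVecLin M : Module.End ℂ (N → ℂ)) μ
      → μ.re ≤ -a) :
    ∃ C : ℝ, 0 < C ∧ ∀ t : ℝ, 0 ≤ t → ∀ v : N → ℂ,
      ‖(exp ((t : ℂ) • M)).mulVec v‖ ≤ C * Real.exp (-(a / 2) * t) * ‖v‖ := by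
  have key := fun i : N => decay_pointwise M ha hspec (Pi.single i (1 : ℂ))
  choose Cf hC0 hCb using key
  have hsumnn : (0:ℝ) ≤ ∑ i, Cf i := Finset.sum_nonneg fun i _ => hC0 i
  refine ⟨∑ i, Cf i + 1, by linarith, ?_⟩
  intro t ht v
  have hv : v = ∑ i, v i • (Pi.single i (1 : ℂ) : N → ℂ) := by
    funext j
    rw [Finset.sum_apply]
    simp [Pi.single_apply, eq_comm]
  have hmv : ∀ w : N → ℂ, (exp ((t : ℂ) • M)).mulVec w
      = Matrix.mulVecLin (exp ((t : ℂ) • M)) w := fun _ => rfl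
  have hsplit : (exp ((t : ℂ) • M)).mulVec v
      = ∑ i, v i • (exp ((t : ℂ) • M)).mulVec (Pi.single i (1 : ℂ) : N → ℂ) := by
    conv_lhs => rw [hv]
    simp_rw [hmv]
    rw [map_sum]
    simp_rw [_root_.map_smul]
  rw [hsplit]
  calc ‖∑ i, v i • (exp ((t : ℂ) • M)).mulVec (Pi.single i (1 : ℂ) : N → ℂ)‖
      ≤ ∑ i, ‖v i • (exp ((t : ℂ) • M)).mulVec (Pi.single i (1 : ℂ) : N → ℂ)‖ :=
        norm_sum_le _ _
    _ ≤ ∑ i, Cf i * Real.exp (-(a / 2) * t) * ‖v‖ := by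
        apply Finset.sum_le_sum
        intro i _
        rw [norm_smul]
        calc ‖v i‖ * ‖(exp ((t : ℂ) • M)).mulVec (Pi.single i (1 : ℂ) : N → ℂ)‖
            ≤ ‖v‖ * (Cf i * Real.exp (-(a / 2) * t)) :=
              mul_le_mul (norm_le_pi_norm v i) (hCb i t ht) (norm_nonneg _) (norm_nonneg _)
          _ = Cf i * Real.exp (-(a / 2) * t) * ‖v‖ := by ring
    _ = (∑ i, Cf i) * Real.exp (-(a / 2) * t) * ‖v‖ := by
        rw [← Finset.sum_mul, ← Finset.sum_mul]
    _ ≤ (∑ i, Cf i + 1) * Real.exp (-(a / 2) * t) * ‖v‖ := by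
        have h1 : (0:ℝ) ≤ Real.exp (-(a / 2) * t) * ‖v‖ :=
          mul_nonneg (Real.exp_nonneg _) (norm_nonneg _)
        nlinarith

lemma exp_map_complex (B : Matrix N N ℝ) (t : ℝ) :
    (exp (t • B)).map (fun x => (x : ℂ))
      = exp ((t : ℂ) • B.map (fun x => (x : ℂ))) := by
  letI : SeminormedRing (Matrix N N ℝ) := Matrix.linftyOpSemiNormedRing
  letI : NormedRing (Matrix N N ℝ) := Matrix.linftyOpNormedRing
  letI : NormedAlgebra ℝ (Matrix N N ℝ) := Matrix.linftyOpNormedAlgebra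
  letI : SeminormedRing (Matrix N N ℂ) := Matrix.linftyOpSemiNormedRing
  letI : NormedRing (Matrix N N ℂ) := Matrix.linftyOpNormedRing
  letI : NormedAlgebra ℝ (Matrix N N ℂ) := Matrix.linftyOpNormedAlgebra
  letI : NormedAlgebra ℚ (Matrix N N ℝ) := Matrix.linftyOpNormedAlgebra
  letI : NormedAlgebra ℚ (Matrix N N ℂ) := Matrix.linftyOpNormedAlgebra
  let F : Matrix N N ℝ →+* Matrix N N ℂ := (Complex.ofRealHom : ℝ →+* ℂ).mapMatrix
  have hF : Continuous F := Continuous.matrix_map continuous_id Complex.continuous_ofReal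
  have h1 : F (exp (t • B)) = exp (F (t • B)) := map_exp F hF _
  have h2 : F (t • B) = (t : ℂ) • B.map (fun x => (x : ℂ)) := by
    ext i j
    simp [F, RingHom.mapMatrix_apply, Complex.real_smul]
  have h3 : (exp : Matrix N N ℂ → Matrix N N ℂ) = exp := rfl
  have h4 : F (exp (t • B)) = (exp (t • B)).map (fun x => (x : ℂ)) := rfl
  rw [← h4, h1, h2, h3]

lemma eucNorm_eq (x : N → ℝ) : eucNorm x = Real.sqrt (∑ i, x i ^ 2) := by
  rw [eucNorm, EuclideanSpace.norm_eq]
  congr 1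
  refine Finset.sum_congr rfl fun i _ => ?_
  rw [show ((WithLp.equiv 2 (N → ℝ)).symm x).ofLp i = x i from rfl, Real.norm_eq_abs, sq_abs]

lemma eucNorm_nonneg (x : N → ℝ) : 0 ≤ eucNorm x := norm_nonneg _

lemma abs_le_eucNorm (x : N → ℝ) (i : N) : |x i| ≤ eucNorm x := by
  rw [eucNorm_eq, ← Real.sqrt_sq_eq_abs]
  apply Real.sqrt_le_sqrt
  exact Finset.single_le_sum (f := fun j => x j ^ 2) (fun j _ => sq_nonneg _) (Finset.mem_univ i)

lemma eucNorm_le_card_norm (x : N → ℝ) :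
    eucNorm x ≤ Real.sqrt (Fintype.card N) * ‖x‖ := by
  rw [eucNorm_eq]
  have h1 : ∑ i, x i ^ 2 ≤ (Fintype.card N : ℝ) * ‖x‖ ^ 2 := by
    calc ∑ i, x i ^ 2 ≤ ∑ _i : N, ‖x‖ ^ 2 := by
          apply Finset.sum_le_sum
          intro i _
          rw [← sq_abs]
          apply pow_le_pow_left₀ (abs_nonneg _) (norm_le_pi_norm x i)
      _ = (Fintype.card N : ℝ) * ‖x‖ ^ 2 := by
          rw [Finset.sum_const, Finset.card_univ, nsmul_eq_mul]
  calc Real.sqrt (∑ i, x i ^ 2) ≤ Real.sqrt ((Fintype.card N : ℝ) * ‖x‖ ^ 2) :=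
        Real.sqrt_le_sqrt h1
    _ = Real.sqrt (Fintype.card N) * ‖x‖ := by
        rw [Real.sqrt_mul (Nat.cast_nonneg _), Real.sqrt_sq (norm_nonneg _)]

lemma norm_complexify (y : N → ℝ) : ‖(fun i => (y i : ℂ) : N → ℂ)‖ = ‖y‖ := by
  simp [Pi.norm_def, Complex.nnnorm_real]

lemma mulVec_map_complex (X : Matrix N N ℝ) (w : N → ℝ) :
    (X.map (fun x => (x : ℂ))).mulVec (fun i => (w i : ℂ))
      = fun i => ((X.mulVec w i : ℝ) : ℂ) := by
  funext i
  simp [Matrix.mulVec, dotProduct, Matrix.map_apply]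

end EulerDecayAux

open EulerDecayAux NormedSpace

/-- If all eigenvalues `λ` of `A` have negative real part and `h·Im(λ)² < −Re(λ)`, then all
eigenvalues of `B` have negative real part, and `exp(tB)(u₀,u₀)ᵀ` decays exponentially. -/
theorem stmt0 {d : ℕ} (A : Matrix (Fin d) (Fin d) ℝ) (h : ℝ) (hh : 0 < h)
    (hA : ∀ μ : ℂ, A.IsEigenvalueC μ → μ.re < 0 ∧ h * μ.im ^ 2 < -μ.re) :
    (∀ μ : ℂ, (eulerBlock A h).IsEigenvalueC μ → μ.re < 0) ∧
      ∃ c > (0 : ℝ), ∃ C > (0 : ℝ), ∀ t : ℝ, 0 ≤ t → ∀ u0 : Fin d → ℝ,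
        eucNorm ((NormedSpace.exp (t • eulerBlock A h)).mulVec (Sum.elim u0 u0))
          ≤ C * Real.exp (-c * t) * eucNorm u0 := by
  classical
  have part1 : ∀ μ : ℂ, (eulerBlock A h).IsEigenvalueC μ → μ.re < 0 := by
    intro μ hμ
    obtain ⟨h1, h2⟩ := hA _ (euler_eig hh hμ)
    exact key_ineq hh h1 h2
  refine ⟨part1, ?_⟩
  set B := eulerBlock A h with hB
  set Mc := B.map (fun x => (x : ℂ)) with hMc
  set f : Module.End ℂ ((Fin d ⊕ Fin d) → ℂ) := Matrix.mulVecLin Mc with hf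
  have hspec0 : ∀ μ : ℂ, f.HasEigenvalue μ → μ.re < 0 := by
    intro μ hμ
    obtain ⟨v, hv⟩ := hμ.exists_hasEigenvector
    apply part1
    refine ⟨v, hv.2, ?_⟩
    have := Module.End.mem_eigenspace_iff.1 hv.1
    exact this
  have hfin := Module.End.finite_hasEigenvalue f
  obtain ⟨a, ha, haspec⟩ : ∃ a : ℝ, 0 < a ∧ ∀ μ : ℂ, f.HasEigenvalue μ → μ.re ≤ -a := by
    by_cases hne : (hfin.toFinset.image fun μ : ℂ => -μ.re).Nonempty
    · set s := hfin.toFinset.image fun μ : ℂ => -μ.re with hs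
      refine ⟨min (s.min' hne) 1, lt_min ?_ one_pos, ?_⟩
      · obtain ⟨μ, hμmem, hμeq⟩ := Finset.mem_image.1 (s.min'_mem hne)
        have hμe : f.HasEigenvalue μ := hfin.mem_toFinset.1 hμmem
        rw [← hμeq]
        linarith [hspec0 μ hμe]
      · intro μ hμ
        have hmem : -μ.re ∈ s := Finset.mem_image.2 ⟨μ, hfin.mem_toFinset.2 hμ, rfl⟩
        have h1 := s.min'_le _ hmem
        have h2 := min_le_left (s.min' hne) 1
        linarith
    · refine ⟨1, one_pos, fun μ hμ => absurd ?_ hne⟩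
      exact ⟨-μ.re, Finset.mem_image.2 ⟨μ, hfin.mem_toFinset.2 hμ, rfl⟩⟩
  obtain ⟨C0, hC0, hdecay⟩ := decay_uniform Mc ha haspec
  have hsqnn : (0:ℝ) ≤ Real.sqrt (Fintype.card (Fin d ⊕ Fin d)) := Real.sqrt_nonneg _
  refine ⟨a / 2, by linarith, Real.sqrt (Fintype.card (Fin d ⊕ Fin d)) * C0 + C0, by nlinarith, ?_⟩
  intro t ht u0
  set v : (Fin d ⊕ Fin d) → ℝ := Sum.elim u0 u0 with hv
  set y : (Fin d ⊕ Fin d) → ℝ := (exp (t • B)).mulVec v with hy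
  have hyC : (fun i => (y i : ℂ)) = (exp ((t : ℂ) • Mc)).mulVec (fun i => (v i : ℂ)) := by
    rw [hy, ← mulVec_map_complex, exp_map_complex]
  have h3 := hdecay t ht (fun i => (v i : ℂ))
  rw [← hyC] at h3
  have h4 : ‖(fun i => (v i : ℂ) : (Fin d ⊕ Fin d) → ℂ)‖ ≤ eucNorm u0 := by
    rw [norm_complexify]
    refine (pi_norm_le_iff_of_nonneg (eucNorm_nonneg u0)).2 ?_
    intro i
    rcases i with i | i <;> simpa [hv] using abs_le_eucNorm u0 i
  have hexpnn : (0:ℝ) ≤ Real.exp (-(a / 2) * t) := Real.exp_nonneg _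
  have hchain : eucNorm y ≤ Real.sqrt (Fintype.card (Fin d ⊕ Fin d)) * C0
      * Real.exp (-(a / 2) * t) * eucNorm u0 := by
    calc eucNorm y ≤ Real.sqrt (Fintype.card (Fin d ⊕ Fin d)) * ‖y‖ := eucNorm_le_card_norm y
      _ = Real.sqrt (Fintype.card (Fin d ⊕ Fin d)) * ‖(fun i => (y i : ℂ) : _ → ℂ)‖ := by
          rw [norm_complexify]
      _ ≤ Real.sqrt (Fintype.card (Fin d ⊕ Fin d))
          * (C0 * Real.exp (-(a / 2) * t) * ‖(fun i => (v i : ℂ) : _ → ℂ)‖) :=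
          mul_le_mul_of_nonneg_left h3 hsqnn
      _ ≤ Real.sqrt (Fintype.card (Fin d ⊕ Fin d))
          * (C0 * Real.exp (-(a / 2) * t) * eucNorm u0) := by
          apply mul_le_mul_of_nonneg_left _ hsqnn
          apply mul_le_mul_of_nonneg_left h4
          positivity
      _ = Real.sqrt (Fintype.card (Fin d ⊕ Fin d)) * C0 * Real.exp (-(a / 2) * t)
          * eucNorm u0 := by ring
  have hgoal : eucNorm y ≤ (Real.sqrt (Fintype.card (Fin d ⊕ Fin d)) * C0 + C0)
      * Real.exp (-(a / 2) * t) * eucNorm u0 := by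
    have hnn : (0:ℝ) ≤ Real.exp (-(a / 2) * t) * eucNorm u0 :=
      mul_nonneg hexpnn (eucNorm_nonneg u0)
    nlinarith
  exact hgoal
end

section
/- Let A ∈ ℝ^{d×d}, h > 0, and B = [[0, A],[h⁻¹ I_d, −h⁻¹ I_d]] ∈ ℝ^{2d×2d}. Then a complex number μ is an eigenvalue of B if and only if hμ² + μ is an eigenvalue of A. Equivalently, the characteristic polynomial of B satisfies det(B − μ I_{2d}) = h^{−d} · det((hμ² + μ) I_d − A) for all μ ∈ ℂ. -/
open Matrix

set_option maxRecDepth 4000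

lemma eig_iff_det {n : Type*} [Fintype n] [DecidableEq n] (M : Matrix n n ℝ) (μ : ℂ) :
    M.IsEigenvalueC μ ↔ ((M.map fun x => (x : ℂ)) - μ • 1).det = 0 := by
  rw [← Matrix.exists_mulVec_eq_zero_iff]
  constructor
  · rintro ⟨v, hv, he⟩
    refine ⟨v, hv, ?_⟩
    rw [Matrix.sub_mulVec, he, Matrix.smul_mulVec, Matrix.one_mulVec, sub_self]
  · rintro ⟨v, hv, he⟩
    refine ⟨v, hv, ?_⟩
    rw [Matrix.sub_mulVec, Matrix.smul_mulVec, Matrix.one_mulVec, sub_eq_zero] at he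
    exact he

lemma neg_smul_one_mul_neg_inv_smul_one {n : Type*} [Fintype n] [DecidableEq n]
    {a : ℂ} (ha : a ≠ 0) :
    (-(a • (1 : Matrix n n ℂ))) * (-(a⁻¹ • 1)) = 1 := by
  rw [Matrix.neg_mul, Matrix.mul_neg, neg_neg, Matrix.smul_mul, Matrix.mul_smul,
    Matrix.one_mul, smul_smul, mul_inv_cancel₀ ha, one_smul]

/-- `μ` is an eigenvalue of `B` iff `hμ² + μ` is an eigenvalue of `A`; equivalently
`det(B − μI) = h^{−d}·det((hμ² + μ)I − A)`. -/
theorem stmt1 {d : ℕ} (A : Matrix (Fin d) (Fin d) ℝ) (h : ℝ) (hh : 0 < h) :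
    (∀ μ : ℂ, (eulerBlock A h).IsEigenvalueC μ ↔ A.IsEigenvalueC ((h : ℂ) * μ ^ 2 + μ)) ∧
      ∀ μ : ℂ,
        ((eulerBlock A h).map (fun x => (x : ℂ)) - μ • 1).det
          = ((h : ℂ))⁻¹ ^ d *
            (((h : ℂ) * μ ^ 2 + μ) • (1 : Matrix (Fin d) (Fin d) ℂ)
              - A.map (fun x => (x : ℂ))).det := by
  have hC : (h : ℂ) ≠ 0 := by exact_mod_cast hh.ne'
  have hc : ((h : ℂ))⁻¹ ≠ 0 := inv_ne_zero hC
  set c : ℂ := (h : ℂ)⁻¹ with hc_def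
  set Aℂ : Matrix (Fin d) (Fin d) ℂ := A.map (fun x => (x : ℂ)) with hAc
  have key : ∀ μ : ℂ, (eulerBlock A h).map (fun x => (x : ℂ)) - μ • 1 =
      Matrix.fromBlocks (-(μ • 1)) Aℂ (c • 1) (-((c + μ) • 1)) := by
    intro μ
    ext (i | i) (j | j) <;>
      simp only [eulerBlock, hAc, hc_def, Matrix.sub_apply, Matrix.smul_apply, Matrix.map_apply,
        Matrix.fromBlocks_apply₁₁, Matrix.fromBlocks_apply₁₂, Matrix.fromBlocks_apply₂₁,
        Matrix.fromBlocks_apply₂₂, Matrix.one_apply, Matrix.neg_apply, Matrix.zero_apply,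
        Sum.inl.injEq, Sum.inr.injEq, smul_eq_mul, reduceCtorEq, if_false] <;>
      first
        | (split_ifs <;> push_cast <;> ring)
        | ring
  have detid : ∀ μ : ℂ,
      ((eulerBlock A h).map (fun x => (x : ℂ)) - μ • 1).det
        = c ^ d * (((h : ℂ) * μ ^ 2 + μ) • (1 : Matrix (Fin d) (Fin d) ℂ) - Aℂ).det := by
    intro μ
    rw [key μ]
    rcases eq_or_ne μ 0 with rfl | hμ
    · have hcμ : c + 0 ≠ 0 := by simpa using hc
      have hinv := neg_smul_one_mul_neg_inv_smul_one (n := Fin d) hcμ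
      haveI := invertibleOfRightInverse _ _ hinv
      rw [Matrix.det_fromBlocks₂₂, invOf_eq_right_inv hinv]
      clear this hinv
      have h1 : -(((0:ℂ)) • (1 : Matrix (Fin d) (Fin d) ℂ)) - Aℂ * (-((c + 0)⁻¹ • 1)) * (c • 1)
          = Aℂ := by
        simp only [Matrix.mul_neg, Matrix.neg_mul, Matrix.mul_smul, Matrix.smul_mul,
          Matrix.mul_one, Matrix.one_mul, smul_smul, smul_sub, neg_smul, neg_neg,
          sub_neg_eq_add]
        match_scalars <;> field_simp <;> simp
      have h2 : ((h : ℂ) * 0 ^ 2 + 0) • (1 : Matrix (Fin d) (Fin d) ℂ) - Aℂ = -Aℂ := by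
        simp
      rw [h1, h2]
      rw [show (-((c + 0) • (1 : Matrix (Fin d) (Fin d) ℂ))) = (-(c + 0)) • 1 by
        rw [neg_smul]]
      rw [Matrix.det_smul, Matrix.det_neg, Matrix.det_one, mul_one]
      simp only [Fintype.card_fin, add_zero]
      rw [show (-c) = (-1) * c by ring, mul_pow]
      ring
    · have hinv := neg_smul_one_mul_neg_inv_smul_one (n := Fin d) hμ
      haveI := invertibleOfRightInverse _ _ hinv
      rw [Matrix.det_fromBlocks₁₁, invOf_eq_right_inv hinv]
      have h1 : -((c + μ) • (1 : Matrix (Fin d) (Fin d) ℂ)) - (c • 1) * (-(μ⁻¹ • 1)) * Aℂ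
          = (-(c * μ⁻¹)) • (((h : ℂ) * μ ^ 2 + μ) • (1 : Matrix (Fin d) (Fin d) ℂ) - Aℂ) := by
        simp only [Matrix.mul_neg, Matrix.neg_mul, Matrix.mul_smul, Matrix.smul_mul,
          Matrix.mul_one, Matrix.one_mul, smul_smul, smul_sub, neg_smul, neg_neg,
          sub_neg_eq_add]
        match_scalars
        · field_simp [hc_def]; rw [hc_def]; linear_combination μ * inv_mul_cancel₀ hC
        · field_simp
      rw [h1]
      rw [show (-(μ • (1 : Matrix (Fin d) (Fin d) ℂ))) = (-μ) • 1 by rw [neg_smul]]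
      rw [Matrix.det_smul, Matrix.det_smul, Matrix.det_one, mul_one]
      simp only [Fintype.card_fin]
      rw [← mul_assoc, ← mul_pow]
      congr 2
      field_simp
  constructor
  · intro μ
    rw [eig_iff_det, eig_iff_det, detid μ]
    have hneg : (((h : ℂ) * μ ^ 2 + μ) • (1 : Matrix (Fin d) (Fin d) ℂ) - Aℂ)
        = -(Aℂ - ((h : ℂ) * μ ^ 2 + μ) • 1) := by rw [neg_sub]
    rw [hneg, Matrix.det_neg]
    simp only [Fintype.card_fin]
    constructor
    · intro h0
      rcases mul_eq_zero.mp h0 with h1 | h1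
      · exact absurd h1 (pow_ne_zero _ hc)
      · rcases mul_eq_zero.mp h1 with h2 | h2
        · exact absurd h2 (pow_ne_zero _ (by norm_num))
        · exact h2
    · intro h0
      rw [h0]; ring
  · intro μ
    exact detid μ
end

section
/- Let A ∈ ℝ^{d×d}, h > 0, u_0 ∈ ℝ^d, and let (w(t), w̄(t)) solve the deterministic Euler dynamics with initial value u_0. Then for every t ≥ 0: ‖w(t) − w̄(t)‖ ≤ √2 · h · ‖exp(tB)‖ · ‖A‖ · ‖u_0‖, where ‖exp(tB)‖ and ‖A‖ are operator norms. -/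
open Matrix

/-- The operator norm (w.r.t. Euclidean norms) of a real square matrix. -/
noncomputable def matOpNorm {n : Type*} [Fintype n] [DecidableEq n] (M : Matrix n n ℝ) : ℝ :=
  ‖Matrix.toEuclideanCLM (𝕜 := ℝ) M‖

/-- The full pair `(w(t), w̄(t)) = exp(tB)(u₀, u₀)ᵀ` of the deterministic Euler dynamics. -/
noncomputable def detEulerPair {d : ℕ} (A : Matrix (Fin d) (Fin d) ℝ) (h : ℝ)
    (u0 : Fin d → ℝ) (t : ℝ) : (Fin d ⊕ Fin d) → ℝ :=
  (NormedSpace.exp (t • eulerBlock A h)).mulVec (Sum.elim u0 u0)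

/-- The first component `w(t)` of the deterministic Euler dynamics. -/
noncomputable def detEulerW {d : ℕ} (A : Matrix (Fin d) (Fin d) ℝ) (h : ℝ)
    (u0 : Fin d → ℝ) (t : ℝ) : Fin d → ℝ :=
  fun i => detEulerPair A h u0 t (Sum.inl i)

/-- The companion process `w̄(t)` of the deterministic Euler dynamics. -/
noncomputable def detEulerWbar {d : ℕ} (A : Matrix (Fin d) (Fin d) ℝ) (h : ℝ)
    (u0 : Fin d → ℝ) (t : ℝ) : Fin d → ℝ :=
  fun i => detEulerPair A h u0 t (Sum.inr i)

lemma eucNorm_def' {n : Type*} [Fintype n] (x : n → ℝ) :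
    eucNorm x = Real.sqrt (∑ i, x i ^ 2) := by
  simp [eucNorm, EuclideanSpace.norm_eq, Real.norm_eq_abs, sq_abs]

lemma eucNorm_nonneg' {n : Type*} [Fintype n] (x : n → ℝ) : 0 ≤ eucNorm x :=
  norm_nonneg _

lemma eucNorm_smul' {n : Type*} [Fintype n] (c : ℝ) (x : n → ℝ) :
    eucNorm (c • x) = |c| * eucNorm x := by
  simp [eucNorm_def', mul_pow, ← Finset.mul_sum, Real.sqrt_mul (sq_nonneg c),
    Real.sqrt_sq_eq_abs]

lemma eucNorm_inr_le' {n m : Type*} [Fintype n] [Fintype m] (y : n ⊕ m → ℝ) :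
    eucNorm (fun i => y (Sum.inr i)) ≤ eucNorm y := by
  rw [eucNorm_def', eucNorm_def', Fintype.sum_sum_type]
  exact Real.sqrt_le_sqrt (le_add_of_nonneg_left (by positivity))

lemma eucNorm_elim_zero' {n m : Type*} [Fintype n] [Fintype m] (z : n → ℝ) :
    eucNorm (Sum.elim z (0 : m → ℝ)) = eucNorm z := by
  rw [eucNorm_def', eucNorm_def', Fintype.sum_sum_type]
  simp

lemma eucNorm_mulVec_le' {n : Type*} [Fintype n] [DecidableEq n] (M : Matrix n n ℝ)
    (x : n → ℝ) : eucNorm (M.mulVec x) ≤ matOpNorm M * eucNorm x := by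
  have := (Matrix.toEuclideanCLM (𝕜 := ℝ) M).le_opNorm ((WithLp.equiv 2 (n → ℝ)).symm x)
  exact this

/-- `‖w(t) − w̄(t)‖ ≤ √2 · h · ‖exp(tB)‖ · ‖A‖ · ‖u₀‖` for all `t ≥ 0`. -/
theorem stmt2 {d : ℕ} (A : Matrix (Fin d) (Fin d) ℝ) (h : ℝ) (hh : 0 < h)
    (u0 : Fin d → ℝ) :
    ∀ t : ℝ, 0 ≤ t →
      eucNorm (detEulerW A h u0 t - detEulerWbar A h u0 t)
        ≤ Real.sqrt 2 * h * matOpNorm (NormedSpace.exp (t • eulerBlock A h))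
            * matOpNorm A * eucNorm u0 := by
  intro t _
  set B := eulerBlock A h with hB
  set E := NormedSpace.exp (t • B) with hE
  set z : (Fin d ⊕ Fin d) → ℝ := Sum.elim (A.mulVec u0) 0 with hz
  -- exp(tB) commutes with B
  have hcomm : E * B = B * E := (((Commute.refl B).smul_left t).exp_left).eq
  -- B (u0, u0) = (A u0, 0)
  have hBv : B.mulVec (Sum.elim u0 u0) = z := by
    rw [hB, eulerBlock, Matrix.fromBlocks_mulVec]
    funext i
    cases i <;>
      simp [Matrix.smul_mulVec, Matrix.neg_mulVec, hz]
  -- key identity: B (E (u0,u0)) = E (B (u0,u0)) = E z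
  have key : B.mulVec (detEulerPair A h u0 t) = E.mulVec z := by
    rw [detEulerPair, Matrix.mulVec_mulVec, ← hE, ← hcomm, ← Matrix.mulVec_mulVec, hBv]
  -- the pair as a Sum.elim of its components
  have hpair : detEulerPair A h u0 t
      = Sum.elim (detEulerW A h u0 t) (detEulerWbar A h u0 t) := by
    funext i; cases i <;> rfl
  -- evaluate key at inr i
  have hdiff : detEulerW A h u0 t - detEulerWbar A h u0 t
      = h • (fun i => (E.mulVec z) (Sum.inr i)) := by
    funext i
    have hk : (B.mulVec (detEulerPair A h u0 t)) (Sum.inr i) = (E.mulVec z) (Sum.inr i) := by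
      rw [key]
    rw [hpair, hB, eulerBlock, Matrix.fromBlocks_mulVec] at hk
    simp only [Sum.elim_comp_inl, Sum.elim_comp_inr, Sum.elim_inr, Pi.add_apply,
      Matrix.smul_mulVec, Matrix.neg_mulVec, Matrix.one_mulVec, Pi.smul_apply,
      Pi.neg_apply, smul_eq_mul] at hk
    have : h⁻¹ * (detEulerW A h u0 t i - detEulerWbar A h u0 t i)
        = (E.mulVec z) (Sum.inr i) := by
      rw [← hk]; ring
    simp only [Pi.sub_apply, Pi.smul_apply, smul_eq_mul]
    field_simp at this ⊢
    linarith [this]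
  -- norm estimates
  have h1 : eucNorm (detEulerW A h u0 t - detEulerWbar A h u0 t)
      = h * eucNorm (fun i => (E.mulVec z) (Sum.inr i)) := by
    rw [hdiff, eucNorm_smul', abs_of_pos hh]
  have h2 : eucNorm (fun i => (E.mulVec z) (Sum.inr i)) ≤ eucNorm (E.mulVec z) :=
    eucNorm_inr_le' _
  have h3 : eucNorm (E.mulVec z) ≤ matOpNorm E * eucNorm z := eucNorm_mulVec_le' _ _
  have h4 : eucNorm z = eucNorm (A.mulVec u0) := by rw [hz, eucNorm_elim_zero']
  have h5 : eucNorm (A.mulVec u0) ≤ matOpNorm A * eucNorm u0 := eucNorm_mulVec_le' _ _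
  have hs : (1 : ℝ) ≤ Real.sqrt 2 := by
    rw [show (1:ℝ) = Real.sqrt 1 by simp]
    exact Real.sqrt_le_sqrt (by norm_num)
  have hEn : 0 ≤ matOpNorm E := norm_nonneg _
  have hAn : 0 ≤ matOpNorm A := norm_nonneg _
  have hun : 0 ≤ eucNorm u0 := eucNorm_nonneg' _
  have hz1 : 0 ≤ eucNorm z := eucNorm_nonneg' _
  have step : eucNorm (detEulerW A h u0 t - detEulerWbar A h u0 t)
      ≤ h * (matOpNorm E * (matOpNorm A * eucNorm u0)) := by
    rw [h1]
    have : eucNorm (fun i => (E.mulVec z) (Sum.inr i))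
        ≤ matOpNorm E * (matOpNorm A * eucNorm u0) := by
      calc eucNorm (fun i => (E.mulVec z) (Sum.inr i)) ≤ matOpNorm E * eucNorm z :=
            le_trans h2 h3
        _ ≤ matOpNorm E * (matOpNorm A * eucNorm u0) := by
            apply mul_le_mul_of_nonneg_left _ hEn
            rw [h4]; exact h5
    exact mul_le_mul_of_nonneg_left this hh.le
  calc eucNorm (detEulerW A h u0 t - detEulerWbar A h u0 t)
      ≤ h * (matOpNorm E * (matOpNorm A * eucNorm u0)) := step
    _ ≤ Real.sqrt 2 * h * matOpNorm E * matOpNorm A * eucNorm u0 := by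
        nlinarith [mul_nonneg (mul_nonneg hEn hAn) hun,
          mul_nonneg hh.le (mul_nonneg (mul_nonneg hEn hAn) hun)]
end

section
/- Let A ∈ ℝ^{d×d} and u_0 ∈ ℝ^d. For h > 0 write (w_h(t), w̄_h(t)) for the deterministic Euler dynamics with stepsize parameter h and initial value u_0, and let u(t) = exp(tA)u_0 be the solution of u' = Au, u(0) = u_0. Then for every t ≥ 0 there exists a constant C_t > 0 such that for all h ∈ (0, 1]: ‖w_h(t) − u(t)‖ ≤ C_t · h. -/
set_option maxHeartbeats 1000000
set_option synthInstance.maxHeartbeats 400000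

open Matrix

/-! ### Auxiliary material -/

open NormedSpace intervalIntegral Set

/-- `Matrix.toEuclideanCLM` as a linear equivalence (to get continuity). -/
noncomputable def euCLME (n : Type*) [Fintype n] [DecidableEq n] :
    Matrix n n ℝ ≃L[ℝ] (EuclideanSpace ℝ n →L[ℝ] EuclideanSpace ℝ n) :=
  LinearEquiv.toContinuousLinearEquiv
    { toFun := fun M => toEuclideanCLM (𝕜 := ℝ) M
      invFun := fun L => (toEuclideanCLM (𝕜 := ℝ)).symm L
      left_inv := fun M => by simp
      right_inv := fun L => by simp
      map_add' := fun x y => map_add _ x y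
      map_smul' := fun c x => map_smul (toEuclideanCLM (𝕜 := ℝ) (n := n)) c x }

lemma euCLM_exp (n : Type*) [Fintype n] [DecidableEq n] (M : Matrix n n ℝ) :
    toEuclideanCLM (𝕜 := ℝ) (NormedSpace.exp M)
      = NormedSpace.exp (toEuclideanCLM (𝕜 := ℝ) M) := by
  have h1 : toEuclideanCLM (𝕜 := ℝ) (NormedSpace.exp M) = euCLME n (NormedSpace.exp M) := rfl
  rw [h1, exp_eq_tsum (𝕂 := ℝ), exp_eq_tsum (𝕂 := ℝ), ContinuousLinearEquiv.map_tsum]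
  congr 1
  funext k
  have h2 : euCLME n (((k.factorial : ℝ)⁻¹) • M ^ k)
      = toEuclideanCLM (𝕜 := ℝ) (((k.factorial : ℝ)⁻¹) • M ^ k) := rfl
  rw [h2, _root_.map_smul, map_pow]

/-- Left projection of Euclidean space over a sum type. -/
noncomputable def projL (d : ℕ) :
    EuclideanSpace ℝ (Fin d ⊕ Fin d) →L[ℝ] EuclideanSpace ℝ (Fin d) :=
  LinearMap.toContinuousLinearMap
    { toFun := fun x => (WithLp.equiv 2 _).symm (fun i => (WithLp.equiv 2 _ x) (Sum.inl i))
      map_add' := fun x y => rfl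
      map_smul' := fun c x => rfl }

/-- Right projection of Euclidean space over a sum type. -/
noncomputable def projR (d : ℕ) :
    EuclideanSpace ℝ (Fin d ⊕ Fin d) →L[ℝ] EuclideanSpace ℝ (Fin d) :=
  LinearMap.toContinuousLinearMap
    { toFun := fun x => (WithLp.equiv 2 _).symm (fun i => (WithLp.equiv 2 _ x) (Sum.inr i))
      map_add' := fun x y => rfl
      map_smul' := fun c x => rfl }

lemma gronwallBound_linear (K b x : ℝ) :
    gronwallBound 0 K b x = b * gronwallBound 0 K 1 x := by
  unfold gronwallBound; split_ifs <;> ring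

lemma gronwallBound_one_nonneg {K x : ℝ} (hK : 0 ≤ K) (hx : 0 ≤ x) :
    0 ≤ gronwallBound 0 K 1 x := by
  unfold gronwallBound
  split_ifs with hK0
  · simpa using hx
  · have hKpos : 0 < K := lt_of_le_of_ne hK (Ne.symm hK0)
    have h1 : (1 : ℝ) ≤ Real.exp (K * x) := by
      rw [← Real.exp_zero]
      exact Real.exp_le_exp.2 (by positivity)
    have := div_nonneg (zero_le_one (α := ℝ)) hKpos.le
    nlinarith

/-- The key quantitative lemma. -/
lemma detEuler_error_bound {d : ℕ} (A : Matrix (Fin d) (Fin d) ℝ) (u0 : Fin d → ℝ)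
    (T : ℝ) (hT : 0 ≤ T) (h : ℝ) (hh0 : 0 < h) :
    eucNorm (detEulerW A h u0 T - (NormedSpace.exp (T • A)).mulVec u0) ≤
      (matOpNorm A * matOpNorm A * (eucNorm u0 * Real.exp ((2 * matOpNorm A + 1) * T))
        * gronwallBound 0 (matOpNorm A) 1 T) * h := by
  classical
  set L := toEuclideanCLM (𝕜 := ℝ) A with hLdef
  set a := ‖L‖ with hadef
  have ha0 : 0 ≤ a := norm_nonneg _
  set K : ℝ := 2 * a + 1 with hKdef
  have hK1 : (1 : ℝ) ≤ K := by simp [hKdef]; linarith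
  have hKpos : 0 < K := lt_of_lt_of_le one_pos hK1
  set u0E : EuclideanSpace ℝ (Fin d) := (WithLp.equiv 2 _).symm u0 with hu0Edef
  set c := ‖u0E‖ with hcdef
  have hc0 : 0 ≤ c := norm_nonneg _
  set M := c * Real.exp (K * T) with hMdef
  have hM0 : 0 ≤ M := by positivity
  set BB := toEuclideanCLM (𝕜 := ℝ) (eulerBlock A h) with hBBdef
  set v0 : EuclideanSpace ℝ (Fin d ⊕ Fin d) := (WithLp.equiv 2 _).symm (Sum.elim u0 u0)
    with hv0def
  set p : ℝ → EuclideanSpace ℝ (Fin d ⊕ Fin d) := fun s => NormedSpace.exp (s • BB) v0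
    with hpdef
  -- derivative of p
  have hp : ∀ s : ℝ, HasDerivAt p (BB (p s)) s := by
    intro s
    have h1 := hasDerivAt_exp_smul_const' (𝕂 := ℝ) BB s
    have h2 := h1.clm_apply (hasDerivAt_const s v0)
    simpa [ContinuousLinearMap.mul_apply] using h2
  have hpc : Continuous p := by
    rw [continuous_iff_continuousAt]; exact fun s => (hp s).continuousAt
  set w : ℝ → EuclideanSpace ℝ (Fin d) := fun s => projL d (p s) with hwdef
  set wb : ℝ → EuclideanSpace ℝ (Fin d) := fun s => projR d (p s) with hwbdef
  set η : ℝ → EuclideanSpace ℝ (Fin d) := fun s => wb s - w s with hηdef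
  -- block structure of BB
  have hblockL : ∀ x : EuclideanSpace ℝ (Fin d ⊕ Fin d), projL d (BB x) = L (projR d x) := by
    intro x
    apply (WithLp.equiv 2 _).injective
    funext i
    show ((eulerBlock A h).mulVec (WithLp.equiv 2 _ x)) (Sum.inl i)
      = (A.mulVec fun j => (WithLp.equiv 2 _ x) (Sum.inr j)) i
    rw [eulerBlock, Matrix.fromBlocks_mulVec]
    simp only [Matrix.zero_mulVec, zero_add, Sum.elim_inl]
    rfl
  have hblockR : ∀ x : EuclideanSpace ℝ (Fin d ⊕ Fin d),
      projR d (BB x) = h⁻¹ • (projL d x - projR d x) := by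
    intro x
    apply (WithLp.equiv 2 _).injective
    funext i
    show ((eulerBlock A h).mulVec (WithLp.equiv 2 _ x)) (Sum.inr i)
      = (h⁻¹ • ((fun j => (WithLp.equiv 2 _ x) (Sum.inl j))
          - fun j => (WithLp.equiv 2 _ x) (Sum.inr j))) i
    rw [eulerBlock, Matrix.fromBlocks_mulVec]
    simp only [Sum.elim_inr, Matrix.neg_mulVec, Matrix.smul_mulVec, Matrix.one_mulVec,
      Pi.add_apply, Pi.neg_apply, Pi.smul_apply, smul_eq_mul, Pi.sub_apply, mul_sub]
    rfl
  -- derivatives of components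
  have hw : ∀ s, HasDerivAt w (L (wb s)) s := by
    intro s
    have := (projL d).hasFDerivAt.comp_hasDerivAt s (hp s)
    have h' : HasDerivAt w (projL d (BB (p s))) s := this
    rwa [hblockL] at h'
  have hwb : ∀ s, HasDerivAt wb (h⁻¹ • (w s - wb s)) s := by
    intro s
    have := (projR d).hasFDerivAt.comp_hasDerivAt s (hp s)
    have h' : HasDerivAt wb (projR d (BB (p s))) s := this
    rwa [hblockR] at h'
  have hη : ∀ s, HasDerivAt η (-(h⁻¹ • η s) - L (wb s)) s := by
    intro s
    have := (hwb s).sub (hw s)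
    have h' : HasDerivAt η (h⁻¹ • (w s - wb s) - L (wb s)) s := this
    convert h' using 1
    simp only [hηdef]
    module
  have hwc : Continuous w := (projL d).continuous.comp hpc
  have hwbc : Continuous wb := (projR d).continuous.comp hpc
  have hηc : Continuous η := hwbc.sub hwc
  -- initial values
  have hp0 : p 0 = v0 := by
    show NormedSpace.exp ((0:ℝ) • BB) v0 = v0
    have hz : (0:ℝ) • BB = 0 := zero_smul ℝ BB
    rw [hz, NormedSpace.exp_zero]; rfl
  have hw0 : w 0 = u0E := by
    rw [hwdef]; simp only [hp0]
    apply (WithLp.equiv 2 _).injective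
    funext i; rfl
  have hwb0 : wb 0 = u0E := by
    rw [hwbdef]; simp only [hp0]
    apply (WithLp.equiv 2 _).injective
    funext i; rfl
  have hη0 : η 0 = 0 := by rw [hηdef]; simp [hw0, hwb0]
  -- integral bound for w
  have hwint : ∀ s : ℝ, w s = w 0 + ∫ r in (0:ℝ)..s, L (wb r) := by
    intro s
    have := intervalIntegral.integral_eq_sub_of_hasDerivAt
      (f := w) (f' := fun r => L (wb r)) (a := 0) (b := s)
      (fun r _ => hw r) ((L.continuous.comp hwbc).intervalIntegrable 0 s)
    rw [this]; abel
  have hwbnd : ∀ s ∈ Icc (0:ℝ) T, ‖w s‖ ≤ c + ∫ r in (0:ℝ)..s, a * ‖wb r‖ := by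
    intro s hs
    rw [hwint s, hw0]
    refine le_trans (norm_add_le _ _) (add_le_add_right ?_ c)
    refine le_trans (intervalIntegral.norm_integral_le_integral_norm hs.1) ?_
    apply intervalIntegral.integral_mono_on hs.1
      ((L.continuous.comp hwbc).norm.intervalIntegrable 0 s)
      (((continuous_const.mul hwbc.norm)).intervalIntegrable 0 s)
    intro r _
    exact L.le_opNorm (wb r)
  -- the ζ trick
  set ζ : ℝ → EuclideanSpace ℝ (Fin d) := fun s => Real.exp (s / h) • η s with hζdef
  have hζd : ∀ s, HasDerivAt ζ (Real.exp (s / h) • (-(L (wb s)))) s := by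
    intro s
    have h1 : HasDerivAt (fun x : ℝ => Real.exp (x / h)) (Real.exp (s / h) * (1 / h)) s :=
      ((hasDerivAt_id s).div_const h).exp
    have h2 := h1.smul (hη s)
    have h2' : HasDerivAt ζ
        (Real.exp (s / h) • (-(h⁻¹ • η s) - L (wb s)) + (Real.exp (s / h) * (1 / h)) • η s) s := h2
    convert h2' using 1
    have hne : h ≠ 0 := ne_of_gt hh0
    simp only [hηdef]
    module
  have hζint : ∀ s : ℝ, ζ s = ∫ r in (0:ℝ)..s, Real.exp (r / h) • (-(L (wb r))) := by
    intro s
    have := intervalIntegral.integral_eq_sub_of_hasDerivAt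
      (f := ζ) (f' := fun r => Real.exp (r / h) • (-(L (wb r)))) (a := 0) (b := s)
      (fun r _ => hζd r)
      (((Real.continuous_exp.comp (continuous_id.div_const h)).smul
        ((L.continuous.comp hwbc).neg)).intervalIntegrable 0 s)
    rw [this, hζdef]
    simp [hη0]
  have hηbound : ∀ s ∈ Icc (0:ℝ) T,
      ‖η s‖ ≤ Real.exp (-(s / h)) * ∫ r in (0:ℝ)..s, Real.exp (r / h) * (a * ‖wb r‖) := by
    intro s hs
    have hηζ : η s = Real.exp (-(s / h)) • ζ s := by
      rw [hζdef]
      simp [smul_smul, ← Real.exp_add]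
    rw [hηζ, norm_smul, Real.norm_eq_abs, abs_of_pos (Real.exp_pos _)]
    apply mul_le_mul_of_nonneg_left _ (Real.exp_pos _).le
    rw [hζint s]
    refine le_trans (intervalIntegral.norm_integral_le_integral_norm hs.1) ?_
    apply intervalIntegral.integral_mono_on hs.1
    · exact (((Real.continuous_exp.comp (continuous_id.div_const h)).smul
        ((L.continuous.comp hwbc).neg)).norm.intervalIntegrable 0 s)
    · exact ((Real.continuous_exp.comp (continuous_id.div_const h)).mul
        (continuous_const.mul hwbc.norm)).intervalIntegrable 0 s
    intro r _
    rw [norm_smul, Real.norm_eq_abs, abs_of_pos (Real.exp_pos _), norm_neg]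
    exact mul_le_mul_of_nonneg_left (L.le_opNorm (wb r)) (Real.exp_pos _).le
  -- step A : a priori bound on wb
  have hηA : ∀ s ∈ Icc (0:ℝ) T, ‖η s‖ ≤ ∫ r in (0:ℝ)..s, a * ‖wb r‖ := by
    intro s hs
    refine le_trans (hηbound s hs) ?_
    have hmono : (∫ r in (0:ℝ)..s, Real.exp (r / h) * (a * ‖wb r‖))
        ≤ ∫ r in (0:ℝ)..s, Real.exp (s / h) * (a * ‖wb r‖) := by
      apply intervalIntegral.integral_mono_on hs.1
      · exact ((Real.continuous_exp.comp (continuous_id.div_const h)).mul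
          (continuous_const.mul hwbc.norm)).intervalIntegrable 0 s
      · exact (continuous_const.mul (continuous_const.mul hwbc.norm)).intervalIntegrable 0 s
      intro r hr
      refine mul_le_mul_of_nonneg_right ?_ (by positivity)
      exact Real.exp_le_exp.2 ((div_le_div_iff_of_pos_right hh0).2 hr.2)
    refine le_trans (mul_le_mul_of_nonneg_left hmono (Real.exp_pos _).le) ?_
    rw [intervalIntegral.integral_const_mul, ← mul_assoc, ← Real.exp_add]
    simp
  set Ψ : ℝ → ℝ := fun s => ∫ r in (0:ℝ)..s, ‖wb r‖ with hΨdef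
  have hwbA : ∀ s ∈ Icc (0:ℝ) T, ‖wb s‖ ≤ c + K * Ψ s := by
    intro s hs
    have h1 : ‖wb s‖ ≤ ‖w s‖ + ‖η s‖ := by
      have : wb s = w s + η s := by simp only [hηdef]; abel
      rw [this]; exact norm_add_le _ _
    have h2 : (∫ r in (0:ℝ)..s, a * ‖wb r‖) = a * ∫ r in (0:ℝ)..s, ‖wb r‖ :=
      intervalIntegral.integral_const_mul _ _
    have h3 : 0 ≤ ∫ r in (0:ℝ)..s, ‖wb r‖ :=
      intervalIntegral.integral_nonneg hs.1 (fun r _ => norm_nonneg _)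
    have h4 := hwbnd s hs
    have h5 := hηA s hs
    rw [h2] at h4 h5
    have h6 : 2 * a ≤ K := by rw [hKdef]; linarith
    have h7 : Ψ s = ∫ r in (0:ℝ)..s, ‖wb r‖ := rfl
    rw [h7]
    nlinarith [mul_le_mul_of_nonneg_right h6 h3]
  -- Gronwall for the a priori bound
  have hΨd : ∀ s : ℝ, HasDerivAt Ψ (‖wb s‖) s := by
    intro s
    exact intervalIntegral.integral_hasDerivAt_right
      (hwbc.norm.intervalIntegrable 0 s)
      (hwbc.norm.stronglyMeasurableAtFilter _ _)
      hwbc.norm.continuousAt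
  have hΨnonneg : ∀ s ∈ Icc (0:ℝ) T, 0 ≤ Ψ s := by
    intro s hs
    have : (0:ℝ) ≤ ∫ r in (0:ℝ)..s, ‖wb r‖ :=
      intervalIntegral.integral_nonneg hs.1 (fun r _ => norm_nonneg _)
    exact this
  have hΨgron : ∀ s ∈ Icc (0:ℝ) T, ‖Ψ s‖ ≤ gronwallBound 0 K c (s - 0) := by
    apply norm_le_gronwallBound_of_norm_deriv_right_le
      (f := Ψ) (f' := fun s => ‖wb s‖)
    · exact fun s _ => (hΨd s).continuousAt.continuousWithinAt
    · exact fun s _ => (hΨd s).hasDerivWithinAt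
    · simp [hΨdef]
    · intro s hs
      have hs' : s ∈ Icc (0:ℝ) T := ⟨hs.1, hs.2.le⟩
      rw [Real.norm_eq_abs, abs_of_nonneg (norm_nonneg _),
        Real.norm_eq_abs, abs_of_nonneg (hΨnonneg s hs')]
      linarith [hwbA s hs']
  have hM : ∀ s ∈ Icc (0:ℝ) T, ‖wb s‖ ≤ M := by
    intro s hs
    have h1 := hwbA s hs
    have h2 := hΨgron s hs
    rw [Real.norm_eq_abs, abs_of_nonneg (hΨnonneg s hs), sub_zero] at h2
    have h3 : gronwallBound 0 K c s = c / K * (Real.exp (K * s) - 1) := by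
      rw [gronwallBound_of_K_ne_0 (ne_of_gt hKpos)]
      ring
    have h4 : c + K * Ψ s ≤ c + K * (c / K * (Real.exp (K * s) - 1)) := by
      rw [← h3]
      exact add_le_add_right (mul_le_mul_of_nonneg_left h2 hKpos.le) c
    have h5 : c + K * (c / K * (Real.exp (K * s) - 1)) = c * Real.exp (K * s) := by
      field_simp
      ring
    have h6 : c * Real.exp (K * s) ≤ M := by
      rw [hMdef]
      exact mul_le_mul_of_nonneg_left
        (Real.exp_le_exp.2 (mul_le_mul_of_nonneg_left hs.2 hKpos.le)) hc0
    exact h1.trans (h4.trans (h5.trans_le h6))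
  -- step B : the fast variable is O(h)
  have hηB : ∀ s ∈ Icc (0:ℝ) T, ‖η s‖ ≤ a * M * h := by
    intro s hs
    refine le_trans (hηbound s hs) ?_
    have hmono : (∫ r in (0:ℝ)..s, Real.exp (r / h) * (a * ‖wb r‖))
        ≤ ∫ r in (0:ℝ)..s, Real.exp (r / h) * (a * M) := by
      apply intervalIntegral.integral_mono_on hs.1
      · exact ((Real.continuous_exp.comp (continuous_id.div_const h)).mul
          (continuous_const.mul hwbc.norm)).intervalIntegrable 0 s
      · exact ((Real.continuous_exp.comp (continuous_id.div_const h)).mul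
          continuous_const).intervalIntegrable 0 s
      intro r hr
      refine mul_le_mul_of_nonneg_left ?_ (Real.exp_pos _).le
      exact mul_le_mul_of_nonneg_left (hM r ⟨hr.1, hr.2.trans hs.2⟩) ha0
    have hexpint : (∫ r in (0:ℝ)..s, Real.exp (r / h)) = h * (Real.exp (s / h) - 1) := by
      have hd : ∀ r : ℝ, HasDerivAt (fun x : ℝ => h * Real.exp (x / h)) (Real.exp (r / h)) r := by
        intro r
        have h1 : HasDerivAt (fun x : ℝ => Real.exp (x / h)) (Real.exp (r / h) * (1 / h)) r :=
          ((hasDerivAt_id r).div_const h).exp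
        have h2 := h1.const_mul h
        have h2' : HasDerivAt (fun x : ℝ => h * Real.exp (x / h)) (h * (Real.exp (r / h) * (1 / h))) r := h2
        convert h2' using 1
        field_simp
      rw [intervalIntegral.integral_eq_sub_of_hasDerivAt (fun r _ => hd r)
        ((Real.continuous_exp.comp (continuous_id.div_const h)).intervalIntegrable 0 s)]
      simp [mul_sub]
    have h7 : (∫ r in (0:ℝ)..s, Real.exp (r / h) * (a * M))
        = (a * M) * (h * (Real.exp (s / h) - 1)) := by
      have : (fun r : ℝ => Real.exp (r / h) * (a * M)) = fun r => (a * M) * Real.exp (r / h) := by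
        funext r; ring
      rw [this, intervalIntegral.integral_const_mul, hexpint]
    have h8 : Real.exp (-(s / h)) * ((a * M) * (h * (Real.exp (s / h) - 1)))
        = a * M * h * (1 - Real.exp (-(s / h))) := by
      have hxy : Real.exp (-(s / h)) * Real.exp (s / h) = 1 := by
        rw [← Real.exp_add]; simp
      linear_combination (a * M * h) * hxy
    calc Real.exp (-(s / h)) * ∫ r in (0:ℝ)..s, Real.exp (r / h) * (a * ‖wb r‖)
        ≤ Real.exp (-(s / h)) * ∫ r in (0:ℝ)..s, Real.exp (r / h) * (a * M) :=
          mul_le_mul_of_nonneg_left hmono (Real.exp_pos _).le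
      _ = a * M * h * (1 - Real.exp (-(s / h))) := by rw [h7, h8]
      _ ≤ a * M * h := by nlinarith [Real.exp_pos (-(s / h)), mul_nonneg (mul_nonneg ha0 hM0) hh0.le]
  -- the limit dynamics
  set u : ℝ → EuclideanSpace ℝ (Fin d) := fun s => NormedSpace.exp (s • L) u0E with hudef
  have hu : ∀ s : ℝ, HasDerivAt u (L (u s)) s := by
    intro s
    have h1 := hasDerivAt_exp_smul_const' (𝕂 := ℝ) L s
    have h2 := h1.clm_apply (hasDerivAt_const s u0E)
    simpa [ContinuousLinearMap.mul_apply] using h2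
  have hu0 : u 0 = u0E := by
    show NormedSpace.exp ((0:ℝ) • L) u0E = u0E
    have hz : (0:ℝ) • L = 0 := zero_smul ℝ L
    rw [hz, NormedSpace.exp_zero]; rfl
  set e : ℝ → EuclideanSpace ℝ (Fin d) := fun s => w s - u s with hedef
  have he : ∀ s : ℝ, HasDerivAt e (L (e s) + L (η s)) s := by
    intro s
    have h1 := (hw s).sub (hu s)
    have h1' : HasDerivAt e (L (wb s) - L (u s)) s := h1
    convert h1' using 1
    simp only [hedef, hηdef, map_sub]
    abel
  have he0 : e 0 = 0 := by rw [hedef]; simp [hw0, hu0]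
  -- final Gronwall
  have hegron : ∀ s ∈ Icc (0:ℝ) T, ‖e s‖ ≤ gronwallBound 0 a (a * (a * M * h)) (s - 0) := by
    apply norm_le_gronwallBound_of_norm_deriv_right_le
      (f := e) (f' := fun s => L (e s) + L (η s))
    · exact fun s _ => (he s).continuousAt.continuousWithinAt
    · exact fun s _ => (he s).hasDerivWithinAt
    · simp [he0]
    · intro s hs
      have hs' : s ∈ Icc (0:ℝ) T := ⟨hs.1, hs.2.le⟩
      refine le_trans (norm_add_le _ _) ?_
      refine add_le_add (L.le_opNorm _) ?_
      refine le_trans (L.le_opNorm _) ?_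
      exact mul_le_mul_of_nonneg_left (hηB s hs') ha0
  have hfinal := hegron T ⟨le_refl 0 |>.trans hT, le_refl T⟩
  rw [sub_zero, gronwallBound_linear] at hfinal
  -- translate to the statement
  have hwT : w T = (WithLp.equiv 2 _).symm (detEulerW A h u0 T) := by
    have hsm : toEuclideanCLM (𝕜 := ℝ) (T • eulerBlock A h) = T • BB :=
      map_smul (toEuclideanCLM (𝕜 := ℝ)) T (eulerBlock A h)
    have hpT : p T = toEuclideanCLM (𝕜 := ℝ) (NormedSpace.exp (T • eulerBlock A h)) v0 := by
      rw [euCLM_exp, hsm]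
    simp only [hwdef, hpT]
    apply (WithLp.equiv 2 _).injective
    funext i
    rfl
  have huT : u T = (WithLp.equiv 2 _).symm ((NormedSpace.exp (T • A)).mulVec u0) := by
    have hsm : toEuclideanCLM (𝕜 := ℝ) (T • A) = T • L :=
      map_smul (toEuclideanCLM (𝕜 := ℝ)) T A
    have huT' : u T = toEuclideanCLM (𝕜 := ℝ) (NormedSpace.exp (T • A)) u0E := by
      rw [euCLM_exp, hsm]
    rw [huT']
    apply (WithLp.equiv 2 _).injective
    funext i
    rfl
  have heT : e T = (WithLp.equiv 2 _).symm
      (detEulerW A h u0 T - (NormedSpace.exp (T • A)).mulVec u0) := by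
    simp only [hedef]
    rw [hwT, huT]
    rfl
  have hnorm : eucNorm (detEulerW A h u0 T - (NormedSpace.exp (T • A)).mulVec u0) = ‖e T‖ := by
    rw [heT]; rfl
  rw [hnorm]
  refine le_trans hfinal ?_
  have hmat : matOpNorm A = a := rfl
  have heuc : eucNorm u0 = c := rfl
  rw [hmat, heuc, hMdef, hKdef]
  have hg1 : 0 ≤ gronwallBound 0 a 1 T := gronwallBound_one_nonneg ha0 hT
  ring_nf
  nlinarith [mul_nonneg (mul_nonneg ha0 ha0) (mul_nonneg hM0 hg1), hh0.le]

/-- For every `t ≥ 0` there is `C_t > 0` with `‖w_h(t) − exp(tA)u₀‖ ≤ C_t·h` for `h ∈ (0,1]`. -/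
theorem stmt4 {d : ℕ} (A : Matrix (Fin d) (Fin d) ℝ) (u0 : Fin d → ℝ) :
    ∀ t : ℝ, 0 ≤ t → ∃ C > (0 : ℝ), ∀ h : ℝ, 0 < h → h ≤ 1 →
      eucNorm (detEulerW A h u0 t - (NormedSpace.exp (t • A)).mulVec u0) ≤ C * h := by
  intro t ht
  set D : ℝ := matOpNorm A * matOpNorm A * (eucNorm u0 * Real.exp ((2 * matOpNorm A + 1) * t))
    * gronwallBound 0 (matOpNorm A) 1 t with hDdef
  have ha0 : 0 ≤ matOpNorm A := norm_nonneg _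
  have hu0 : 0 ≤ eucNorm u0 := norm_nonneg _
  have hg0 : 0 ≤ gronwallBound 0 (matOpNorm A) 1 t := gronwallBound_one_nonneg ha0 ht
  have hD0 : 0 ≤ D := by
    apply mul_nonneg _ hg0
    apply mul_nonneg (mul_nonneg ha0 ha0)
    positivity
  refine ⟨D + 1, by linarith, ?_⟩
  intro h hh0 hh1
  have := detEuler_error_bound A u0 t ht h hh0
  calc eucNorm (detEulerW A h u0 t - (NormedSpace.exp (t • A)).mulVec u0)
      ≤ D * h := this
    _ ≤ (D + 1) * h := by nlinarith
end

section
/- Let A ∈ ℝ^{d×d} and u_0 ∈ ℝ^d. For h > 0 write (w_h(t), w̄_h(t)) for the deterministic Euler dynamics with stepsize parameter h and initial value u_0, and let u(t) = exp(tA)u_0 be the solution of u' = Au, u(0) = u_0. Then for every t ≥ 0 there exists a constant C*_t > 0 such that for all h ∈ (0, 1]: ‖w̄_h(t) − u(t)‖ ≤ C*_t · h. -/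
open Matrix

/-!
The second equation makes `w̄` relax towards `w` at rate `1/h`. For a relaxation
`y' = g - h⁻¹ y` the weight `e^{t/h}` gives `(e^{t/h} y)' = e^{t/h} g`, hence
`‖y‖ ≤ h · sup ‖g‖` and `∫ ‖y‖ ≤ h (‖y 0‖ + ∫ ‖g‖)`. With `y = w̄`, `g = h⁻¹ w` the integral
bound reads `∫ ‖w̄‖ ≤ h ‖u₀‖ + ∫ ‖w‖`, so Grönwall bounds `w`, and then `w̄`, uniformly in
`h ≤ 1`. With `y = w - w̄`, `g = A w̄` the pointwise bound gives `‖w - w̄‖ = O(h)`. Finally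
`(w - u)' = A (w - u) + A (w̄ - w)`, and Grönwall gives `‖w - u‖ = O(h)`.
-/

open Set

section Relaxation

variable {E : Type*} [NormedAddCommGroup E] [NormedSpace ℝ E]

theorem norm_le_add_integral_of_norm_deriv_le {f f' : ℝ → E} {g : ℝ → ℝ} {t : ℝ}
    (hf : ∀ s, HasDerivAt f (f' s) s) (hg : Continuous g) (bound : ∀ s ∈ Ico 0 t, ‖f' s‖ ≤ g s)
    (ht : 0 ≤ t) : ‖f t‖ ≤ ‖f 0‖ + ∫ s in (0 : ℝ)..t, g s :=
  image_norm_le_of_norm_deriv_right_le_deriv_boundary (a := 0) (b := t)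
    (fun x _ => (hf x).continuousAt.continuousWithinAt) (fun x _ => (hf x).hasDerivWithinAt)
    (B := fun x => ‖f 0‖ + ∫ s in (0 : ℝ)..x, g s) (by simp)
    (fun x => (hg.integral_hasStrictDerivAt 0 x).hasDerivAt.const_add _) bound ⟨ht, le_rfl⟩

theorem le_mul_exp_of_le_add_mul_integral {φ : ℝ → ℝ} {c K T : ℝ} (hφ : Continuous φ)
    (hK : 0 ≤ K) (hle : ∀ t ∈ Icc 0 T, φ t ≤ c + K * ∫ s in (0 : ℝ)..t, φ s) :
    ∀ t ∈ Icc 0 T, φ t ≤ c * Real.exp (K * t) := by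
  have hΦ : ∀ x, HasDerivAt (fun r => ∫ s in (0 : ℝ)..r, φ s) (φ x) x := fun x =>
    (hφ.integral_hasStrictDerivAt 0 x).hasDerivAt
  have hΦle := le_gronwallBound_of_liminf_deriv_right_le
    (f := fun r => ∫ s in (0 : ℝ)..r, φ s) (δ := 0) (K := K) (ε := c) (a := 0) (b := T)
    (fun x _ => (hΦ x).continuousAt.continuousWithinAt)
    (fun x _ _ hr => (hΦ x).hasDerivWithinAt.liminf_right_slope_le hr) (by simp)
    (fun x hx => by linarith [hle x (Ico_subset_Icc_self hx)])
  intro t ht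
  calc φ t ≤ c + K * ∫ s in (0 : ℝ)..t, φ s := hle t ht
    _ ≤ c + K * gronwallBound 0 K c t := by
      gcongr
      simpa using hΦle t ht
    _ = c * Real.exp (K * t) := by
      rcases eq_or_ne K 0 with rfl | hK0
      · simp [gronwallBound_K0]
      · rw [gronwallBound_of_K_ne_0 hK0]
        field_simp
        ring

theorem gronwallBound_zero_mul (c K ε x : ℝ) :
    gronwallBound 0 K (c * ε) x = c * gronwallBound 0 K ε x := by
  unfold gronwallBound
  split_ifs <;> ring

theorem hasDerivAt_exp_div_smul_of_relaxation {y g : ℝ → E} {h t : ℝ}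
    (hy : HasDerivAt y (g t - h⁻¹ • y t) t) :
    HasDerivAt (fun s => Real.exp (s / h) • y s) (Real.exp (t / h) • g t) t := by
  have he : HasDerivAt (fun s => Real.exp (s / h)) (Real.exp (t / h) * h⁻¹) t := by
    simpa [div_eq_mul_inv] using ((hasDerivAt_id t).div_const h).exp
  refine (he.smul hy).congr_deriv ?_
  rw [smul_sub, smul_smul, mul_smul]
  abel

theorem norm_le_of_relaxation {y g : ℝ → E} {h K t : ℝ} (hh : 0 < h)
    (hy : ∀ s, HasDerivAt y (g s - h⁻¹ • y s) s) (hg : ∀ s ∈ Ico 0 t, ‖g s‖ ≤ K)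
    (hy0 : ‖y 0‖ ≤ h * K) (ht : 0 ≤ t) : ‖y t‖ ≤ h * K := by
  have hf := fun s => hasDerivAt_exp_div_smul_of_relaxation (hy s)
  have hB : ∀ s, HasDerivAt (fun r => h * K * Real.exp (r / h)) (K * Real.exp (s / h)) s := by
    intro s
    refine ((((hasDerivAt_id s).div_const h).exp).const_mul (h * K)).congr_deriv ?_
    simp only [id]
    field_simp
  have hbound := image_norm_le_of_norm_deriv_right_le_deriv_boundary
    (fun x _ => (hf x).continuousAt.continuousWithinAt) (fun x _ => (hf x).hasDerivWithinAt)
    (by simpa using hy0) hB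
    (fun s hs => by
      rw [norm_smul, Real.norm_of_nonneg (Real.exp_pos _).le, mul_comm]
      exact mul_le_mul_of_nonneg_right (hg s hs) (Real.exp_pos _).le) ⟨ht, le_rfl⟩
  rw [norm_smul, Real.norm_of_nonneg (Real.exp_pos _).le, mul_comm (h * K)] at hbound
  exact le_of_mul_le_mul_left hbound (Real.exp_pos _)

theorem integral_norm_le_of_relaxation {y g : ℝ → E} {h t : ℝ} (hh : 0 < h)
    (hy : ∀ s, HasDerivAt y (g s - h⁻¹ • y s) s) (hg : Continuous g) (ht : 0 ≤ t) :
    ∫ s in (0 : ℝ)..t, ‖y s‖ ≤ h * (‖y 0‖ + ∫ s in (0 : ℝ)..t, ‖g s‖) := by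
  set F : ℝ → ℝ := fun s => ∫ r in (0 : ℝ)..s, Real.exp (r / h) * ‖g r‖
  -- the solution of the scalar relaxation `q' = ‖g‖ - h⁻¹ q`, `q 0 = ‖y 0‖`; it dominates `‖y‖`
  set q : ℝ → ℝ := fun s => Real.exp (-(s / h)) * (‖y 0‖ + F s)
  have hFc : Continuous fun r => Real.exp (r / h) * ‖g r‖ := by fun_prop
  have hF : ∀ s, HasDerivAt F (Real.exp (s / h) * ‖g s‖) s := fun s =>
    (hFc.integral_hasStrictDerivAt 0 s).hasDerivAt
  have hq : ∀ s, HasDerivAt q (‖g s‖ - h⁻¹ * q s) s := by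
    intro s
    have he : HasDerivAt (fun r => Real.exp (-(r / h))) (Real.exp (-(s / h)) * -h⁻¹) s := by
      simpa [div_eq_mul_inv] using ((hasDerivAt_id s).div_const h).neg.exp
    refine (he.mul ((hF s).const_add ‖y 0‖)).congr_deriv ?_
    simp only [q]
    rw [← mul_assoc, ← Real.exp_add, neg_add_cancel, Real.exp_zero]
    ring
  have hyq : ∀ s ∈ Icc 0 t, ‖y s‖ ≤ q s := by
    intro s hs
    have hys := norm_le_add_integral_of_norm_deriv_le
      (fun r => hasDerivAt_exp_div_smul_of_relaxation (hy r)) hFc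
      (fun r _ => by rw [norm_smul, Real.norm_of_nonneg (Real.exp_pos _).le]) hs.1
    rw [norm_smul, Real.norm_of_nonneg (Real.exp_pos _).le] at hys
    simp only [zero_div, Real.exp_zero, one_smul] at hys
    calc ‖y s‖ = Real.exp (-(s / h)) * (Real.exp (s / h) * ‖y s‖) := by
          rw [← mul_assoc, ← Real.exp_add, neg_add_cancel, Real.exp_zero, one_mul]
      _ ≤ q s := mul_le_mul_of_nonneg_left hys (Real.exp_pos _).le
  have hqc : Continuous q := continuous_iff_continuousAt.2 fun s => (hq s).continuousAt
  have hq0 : q 0 = ‖y 0‖ := by simp [q, F]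
  have hqt : 0 ≤ q t :=
    mul_nonneg (Real.exp_pos _).le (add_nonneg (norm_nonneg _)
      (intervalIntegral.integral_nonneg ht fun r _ => by positivity))
  have hint : ∫ s in (0 : ℝ)..t, (‖g s‖ - h⁻¹ * q s) = q t - q 0 :=
    intervalIntegral.integral_eq_sub_of_hasDerivAt (fun s _ => hq s)
      ((hg.norm.sub (continuous_const.mul hqc)).intervalIntegrable _ _)
  rw [intervalIntegral.integral_sub (f := fun s => ‖g s‖) (g := fun s => h⁻¹ * q s)
    (hg.norm.intervalIntegrable _ _) ((continuous_const.mul hqc).intervalIntegrable _ _),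
    intervalIntegral.integral_const_mul] at hint
  have hyc : Continuous y := continuous_iff_continuousAt.2 fun s => (hy s).continuousAt
  calc ∫ s in (0 : ℝ)..t, ‖y s‖ ≤ ∫ s in (0 : ℝ)..t, q s :=
        intervalIntegral.integral_mono_on ht (hyc.norm.intervalIntegrable _ _)
          (hqc.intervalIntegrable _ _) hyq
    _ = h * ((∫ s in (0 : ℝ)..t, ‖g s‖) - (q t - q 0)) := by
        rw [← hint, sub_sub_cancel, ← mul_assoc, mul_inv_cancel₀ hh.ne', one_mul]
    _ ≤ h * (‖y 0‖ + ∫ s in (0 : ℝ)..t, ‖g s‖) := by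
        rw [hq0]
        gcongr
        linarith

end Relaxation

structure IsEulerDynamics {E : Type*} [NormedAddCommGroup E] [NormedSpace ℝ E]
    (L : E →L[ℝ] E) (h : ℝ) (w wbar : ℝ → E) : Prop where
  hasDerivAt_w : ∀ t, HasDerivAt w (L (wbar t)) t
  hasDerivAt_wbar : ∀ t, HasDerivAt wbar (h⁻¹ • (w t - wbar t)) t
  wbar_zero : wbar 0 = w 0

namespace IsEulerDynamics

variable {E : Type*} [NormedAddCommGroup E] [NormedSpace ℝ E] {L : E →L[ℝ] E} {h : ℝ}
  {w wbar : ℝ → E}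

theorem continuous_w (hE : IsEulerDynamics L h w wbar) : Continuous w :=
  continuous_iff_continuousAt.2 fun t => (hE.hasDerivAt_w t).continuousAt

theorem continuous_wbar (hE : IsEulerDynamics L h w wbar) : Continuous wbar :=
  continuous_iff_continuousAt.2 fun t => (hE.hasDerivAt_wbar t).continuousAt

theorem wbar_relaxation (hE : IsEulerDynamics L h w wbar) (t : ℝ) :
    HasDerivAt wbar (h⁻¹ • w t - h⁻¹ • wbar t) t := by
  simpa only [smul_sub] using hE.hasDerivAt_wbar t

theorem w_sub_wbar_relaxation (hE : IsEulerDynamics L h w wbar) (t : ℝ) :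
    HasDerivAt (fun s => w s - wbar s) (L (wbar t) - h⁻¹ • (w t - wbar t)) t :=
  (hE.hasDerivAt_w t).sub (hE.hasDerivAt_wbar t)

theorem integral_norm_wbar_le (hE : IsEulerDynamics L h w wbar) (hh : 0 < h) {t : ℝ}
    (ht : 0 ≤ t) : ∫ s in (0 : ℝ)..t, ‖wbar s‖ ≤ h * ‖w 0‖ + ∫ s in (0 : ℝ)..t, ‖w s‖ := by
  have := integral_norm_le_of_relaxation hh hE.wbar_relaxation
    (continuous_const.smul hE.continuous_w) ht
  simpa only [norm_smul, Real.norm_of_nonneg (inv_nonneg.2 hh.le),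
    intervalIntegral.integral_const_mul, mul_add, mul_inv_cancel_left₀ hh.ne', hE.wbar_zero]
    using this

theorem norm_w_le (hE : IsEulerDynamics L h w wbar) (hh : 0 < h) {t : ℝ} (ht : 0 ≤ t) :
    ‖w t‖ ≤ ‖w 0‖ * (1 + ‖L‖ * h) * Real.exp (‖L‖ * t) := by
  refine le_mul_exp_of_le_add_mul_integral hE.continuous_w.norm (norm_nonneg L)
    (fun s hs => ?_) t ⟨ht, le_rfl⟩
  calc ‖w s‖ ≤ ‖w 0‖ + ∫ r in (0 : ℝ)..s, ‖L‖ * ‖wbar r‖ :=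
        norm_le_add_integral_of_norm_deriv_le hE.hasDerivAt_w
          (continuous_const.mul hE.continuous_wbar.norm) (fun r _ => L.le_opNorm _) hs.1
    _ ≤ ‖w 0‖ + ‖L‖ * (h * ‖w 0‖ + ∫ r in (0 : ℝ)..s, ‖w r‖) := by
        rw [intervalIntegral.integral_const_mul]
        gcongr
        exact hE.integral_norm_wbar_le hh hs.1
    _ = ‖w 0‖ * (1 + ‖L‖ * h) + ‖L‖ * ∫ r in (0 : ℝ)..s, ‖w r‖ := by ring

theorem norm_wbar_le (hE : IsEulerDynamics L h w wbar) (hh : 0 < h) {R t : ℝ}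
    (hR : ∀ s ∈ Icc 0 t, ‖w s‖ ≤ R) (ht : 0 ≤ t) : ‖wbar t‖ ≤ R := by
  have := norm_le_of_relaxation (K := h⁻¹ * R) hh hE.wbar_relaxation (fun s hs => ?_) ?_ ht
  · rwa [mul_inv_cancel_left₀ hh.ne'] at this
  · rw [norm_smul, Real.norm_of_nonneg (inv_nonneg.2 hh.le)]
    gcongr
    exact hR s (Ico_subset_Icc_self hs)
  · rw [mul_inv_cancel_left₀ hh.ne', hE.wbar_zero]
    exact hR 0 ⟨le_rfl, ht⟩

theorem norm_w_sub_wbar_le (hE : IsEulerDynamics L h w wbar) (hh : 0 < h) {R t : ℝ}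
    (hR : ∀ s ∈ Icc 0 t, ‖w s‖ ≤ R) (ht : 0 ≤ t) : ‖w t - wbar t‖ ≤ h * (‖L‖ * R) := by
  have hR0 : 0 ≤ R := (norm_nonneg _).trans (hR 0 ⟨le_rfl, ht⟩)
  refine norm_le_of_relaxation hh hE.w_sub_wbar_relaxation (fun s hs => ?_) ?_ ht
  · refine (L.le_opNorm _).trans ?_
    gcongr
    exact hE.norm_wbar_le hh (fun r hr => hR r ⟨hr.1, hr.2.trans hs.2.le⟩) hs.1
  · rw [hE.wbar_zero, sub_self, norm_zero]
    positivity

theorem norm_wbar_sub_le (hE : IsEulerDynamics L h w wbar) (hh : 0 < h) {u : ℝ → E}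
    (hu : ∀ t, HasDerivAt u (L (u t)) t) (hu0 : u 0 = w 0) {R T : ℝ}
    (hR : ∀ s ∈ Icc 0 T, ‖w s‖ ≤ R) (hT : 0 ≤ T) :
    ‖wbar T - u T‖ ≤ h * (‖L‖ * R + gronwallBound 0 ‖L‖ (‖L‖ * (‖L‖ * R)) T) := by
  have hgap : ∀ s ∈ Icc 0 T, ‖w s - wbar s‖ ≤ h * (‖L‖ * R) := fun s hs =>
    hE.norm_w_sub_wbar_le hh (fun r hr => hR r ⟨hr.1, hr.2.trans hs.2⟩) hs.1
  have hd : ∀ s, HasDerivAt (fun r => w r - u r) (L (wbar s) - L (u s)) s := fun s =>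
    (hE.hasDerivAt_w s).sub (hu s)
  have herr := norm_le_gronwallBound_of_norm_deriv_right_le (a := 0) (b := T)
    (δ := 0) (K := ‖L‖) (ε := h * (‖L‖ * (‖L‖ * R)))
    (fun x _ => (hd x).continuousAt.continuousWithinAt) (fun x _ => (hd x).hasDerivWithinAt)
    (by simp [hu0]) (fun s hs => ?_) T ⟨hT, le_rfl⟩
  · calc ‖wbar T - u T‖ ≤ ‖wbar T - w T‖ + ‖w T - u T‖ := norm_sub_le_norm_sub_add_norm_sub _ _ _
      _ ≤ h * (‖L‖ * R) + h * gronwallBound 0 ‖L‖ (‖L‖ * (‖L‖ * R)) T := by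
        rw [norm_sub_rev, ← gronwallBound_zero_mul]
        exact add_le_add (hgap T ⟨hT, le_rfl⟩) (by simpa using herr)
      _ = _ := by ring
  · calc ‖L (wbar s) - L (u s)‖ = ‖L (w s - u s) - L (w s - wbar s)‖ := by
          rw [← map_sub, ← map_sub, sub_sub_sub_cancel_left]
      _ ≤ ‖L‖ * ‖w s - u s‖ + ‖L‖ * (h * (‖L‖ * R)) :=
          (norm_sub_le _ _).trans (add_le_add (L.le_opNorm _)
            ((L.le_opNorm _).trans (by gcongr; exact hgap s (Ico_subset_Icc_self hs))))
      _ = ‖L‖ * ‖w s - u s‖ + h * (‖L‖ * (‖L‖ * R)) := by ring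

end IsEulerDynamics

section MatrixDynamics

open scoped Matrix.Norms.L2Operator in
theorem hasDerivAt_exp_smul_mulVec {n : Type*} [Fintype n] [DecidableEq n]
    (M : Matrix n n ℝ) (x : n → ℝ) (t : ℝ) :
    HasDerivAt (fun s : ℝ => NormedSpace.exp (s • M) *ᵥ x)
      (M *ᵥ (NormedSpace.exp (t • M) *ᵥ x)) t := by
  let mulVecCLM : Matrix n n ℝ →L[ℝ] n → ℝ :=
    LinearMap.toContinuousLinearMap ((LinearMap.applyₗ x).comp Matrix.toLin'.toLinearMap)
  exact (mulVecCLM.hasFDerivAt.comp_hasDerivAt t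
    (hasDerivAt_exp_smul_const' (𝕂 := ℝ) M t)).congr_deriv (Matrix.mulVec_mulVec _ _ _).symm

theorem HasDerivAt.toLp {n : Type*} [Fintype n] {f : ℝ → n → ℝ} {f' : n → ℝ} {t : ℝ}
    (hf : HasDerivAt f f' t) : HasDerivAt (fun s => WithLp.toLp 2 (f s)) (WithLp.toLp 2 f') t :=
  (PiLp.hasFDerivAt_toLp 2 (f t)).comp_hasDerivAt t hf

variable {d : ℕ} (A : Matrix (Fin d) (Fin d) ℝ) (h : ℝ) (u0 : Fin d → ℝ)

theorem eulerBlock_mulVec_inl (v : Fin d ⊕ Fin d → ℝ) (i : Fin d) :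
    (eulerBlock A h *ᵥ v) (Sum.inl i) = (A *ᵥ (v ∘ Sum.inr)) i := by
  simp [eulerBlock, Matrix.fromBlocks_mulVec]

theorem eulerBlock_mulVec_inr (v : Fin d ⊕ Fin d → ℝ) (i : Fin d) :
    (eulerBlock A h *ᵥ v) (Sum.inr i) = h⁻¹ * (v (Sum.inl i) - v (Sum.inr i)) := by
  simp [eulerBlock, Matrix.fromBlocks_mulVec, Matrix.smul_mulVec, Matrix.neg_mulVec]
  ring

theorem hasDerivAt_detEulerW (t : ℝ) :
    HasDerivAt (detEulerW A h u0) (A *ᵥ detEulerWbar A h u0 t) t :=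
  hasDerivAt_pi.2 fun i =>
    (hasDerivAt_pi.1 (hasDerivAt_exp_smul_mulVec _ _ t) (Sum.inl i)).congr_deriv
      (eulerBlock_mulVec_inl A h _ i)

theorem hasDerivAt_detEulerWbar (t : ℝ) :
    HasDerivAt (detEulerWbar A h u0) (h⁻¹ • (detEulerW A h u0 t - detEulerWbar A h u0 t)) t :=
  hasDerivAt_pi.2 fun i =>
    (hasDerivAt_pi.1 (hasDerivAt_exp_smul_mulVec _ _ t) (Sum.inr i)).congr_deriv
      (eulerBlock_mulVec_inr A h _ i)

theorem detEulerW_zero : detEulerW A h u0 0 = u0 := by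
  ext i
  simp [detEulerW, detEulerPair]

theorem detEulerWbar_zero : detEulerWbar A h u0 0 = u0 := by
  ext i
  simp [detEulerWbar, detEulerPair]

theorem isEulerDynamics_detEuler :
    IsEulerDynamics (Matrix.toEuclideanCLM (𝕜 := ℝ) A) h
      (fun t => WithLp.toLp 2 (detEulerW A h u0 t))
      (fun t => WithLp.toLp 2 (detEulerWbar A h u0 t)) where
  hasDerivAt_w t := (hasDerivAt_detEulerW A h u0 t).toLp
  hasDerivAt_wbar t := (hasDerivAt_detEulerWbar A h u0 t).toLp
  wbar_zero := by rw [detEulerW_zero, detEulerWbar_zero]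

end MatrixDynamics

theorem eucNorm_sub {n : Type*} [Fintype n] (x y : n → ℝ) :
    eucNorm (x - y) = ‖WithLp.toLp 2 x - WithLp.toLp 2 y‖ := by
  rw [eucNorm, ← WithLp.toLp_sub]
  rfl

/-- For every `t ≥ 0` there is `C*_t > 0` with `‖w̄_h(t) − exp(tA)u₀‖ ≤ C*_t·h` for `h ∈ (0,1]`. -/
theorem stmt5 {d : ℕ} (A : Matrix (Fin d) (Fin d) ℝ) (u0 : Fin d → ℝ) :
    ∀ t : ℝ, 0 ≤ t → ∃ C > (0 : ℝ), ∀ h : ℝ, 0 < h → h ≤ 1 →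
      eucNorm (detEulerWbar A h u0 t - (NormedSpace.exp (t • A)).mulVec u0) ≤ C * h := by
  intro T hT
  set L := Matrix.toEuclideanCLM (𝕜 := ℝ) A
  set R := ‖WithLp.toLp 2 u0‖ * (1 + ‖L‖) * Real.exp (‖L‖ * T)
  set C := ‖L‖ * R + gronwallBound 0 ‖L‖ (‖L‖ * (‖L‖ * R)) T
  refine ⟨max C 1, by positivity, fun h hh hh1 => ?_⟩
  have hE := isEulerDynamics_detEuler A h u0
  have hR : ∀ s ∈ Icc 0 T, ‖WithLp.toLp 2 (detEulerW A h u0 s)‖ ≤ R := fun s hs => by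
    refine (hE.norm_w_le hh hs.1).trans ?_
    rw [detEulerW_zero]
    show _ ≤ ‖WithLp.toLp 2 u0‖ * (1 + ‖L‖) * Real.exp (‖L‖ * T)
    gcongr
    · exact mul_le_of_le_one_right (norm_nonneg L) hh1
    · exact hs.2
  have hu t := (hasDerivAt_exp_smul_mulVec A u0 t).toLp
  calc eucNorm (detEulerWbar A h u0 T - NormedSpace.exp (T • A) *ᵥ u0)
      ≤ h * C := by
        rw [eucNorm_sub]
        exact hE.norm_wbar_sub_le hh hu (by simp [detEulerW_zero]) hR hT
    _ ≤ max C 1 * h := by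
      rw [mul_comm]
      gcongr
      exact le_max_left _ _
end

section
/- Let f : ℝ^d → ℝ^d be Lipschitz continuous and bounded, let u_0 ∈ ℝ^d, and let u ∈ C([0,∞); ℝ^d) be the solution of u' = f(u), u(0) = u_0. For each h > 0 let (V_h(t))_{t≥0} be the stochastic Euler dynamics path with stepsize parameter h and initial value u_0; it is a random element of C([0,∞); ℝ^d). Then V_h converges weakly to the deterministic path u as h ↓ 0: for every bounded continuous functional F : C([0,∞); ℝ^d) → ℝ (with respect to the topology of uniform convergence on compact time intervals), lim_{h↓0} 𝔼[F(V_h)] = F(u). -/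
open MeasureTheory ProbabilityTheory
open scoped NNReal

/-- The jump times `T_k = H_1 + ⋯ + H_k` (here `H i` stands for `H_{i+1}`). -/
noncomputable def jumpTime {Ω : Type*} (H : ℕ → Ω → ℝ) (k : ℕ) (ω : Ω) : ℝ :=
  ∑ i ∈ Finset.range k, H i ω

/-- The counting process `K(t) = max {k : T_k ≤ t}`. -/
noncomputable def jumpCount {Ω : Type*} (H : ℕ → Ω → ℝ) (t : ℝ) (ω : Ω) : ℕ :=
  sSup {k | jumpTime H k ω ≤ t}

/-- The random timestep Euler chain `V̂_0 = u₀`, `V̂_k = V̂_{k−1} + H_k f(V̂_{k−1})`. -/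
noncomputable def eulerChain {Ω E : Type*} [AddCommGroup E] [Module ℝ E]
    (f : E → E) (u0 : E) (H : ℕ → Ω → ℝ) : ℕ → Ω → E
  | 0, _ => u0
  | (k + 1), ω => eulerChain f u0 H k ω + H k ω • f (eulerChain f u0 H k ω)

/-- The stochastic Euler dynamics path
`V(t) = V̂_{K(t)} + (t − T_{K(t)}) f(V̂_{K(t)})`. -/
noncomputable def eulerPath {Ω E : Type*} [AddCommGroup E] [Module ℝ E]
    (f : E → E) (u0 : E) (H : ℕ → Ω → ℝ) (t : ℝ) (ω : Ω) : E :=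
  eulerChain f u0 H (jumpCount H t ω) ω +
    (t - jumpTime H (jumpCount H t ω) ω) • f (eulerChain f u0 H (jumpCount H t ω) ω)

section AuxProbability

open Real Set

open scoped ENNReal

lemma sde_expMeasure_Iic {r : ℝ} (hr : 0 < r) (x : ℝ) :
    expMeasure r (Iic x) = ENNReal.ofReal (if 0 ≤ x then 1 - exp (-(r * x)) else 0) := by
  rw [expMeasure, gammaMeasure, withDensity_apply _ measurableSet_Iic]
  exact lintegral_exponentialPDF_eq_antiDeriv hr x

lemma sde_expMeasure_Ioi {r : ℝ} (hr : 0 < r) {x : ℝ} (hx : 0 ≤ x) :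
    expMeasure r (Ioi x) = ENNReal.ofReal (exp (-(r * x))) := by
  have h1 : IsProbabilityMeasure (expMeasure r) := isProbabilityMeasure_expMeasure hr
  have h2 := measure_compl (μ := expMeasure r) measurableSet_Iic (measure_ne_top _ (Iic x))
  rw [compl_Iic] at h2
  have he : exp (-(r * x)) ≤ 1 := by
    rw [exp_le_one_iff]; simp only [neg_nonpos]; positivity
  rw [h2, sde_expMeasure_Iic hr, if_pos hx, measure_univ,
    ← ENNReal.ofReal_one, ← ENNReal.ofReal_sub _ (by linarith)]
  norm_num

lemma sde_expMeasure_Iic_zero {r : ℝ} (hr : 0 < r) : expMeasure r (Iic 0) = 0 := by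
  rw [sde_expMeasure_Iic hr, if_pos le_rfl]
  simp

lemma sde_pointwise_exp_pdf {r : ℝ} (hr : 0 < r) (x : ℝ) :
    exponentialPDF r x * ENNReal.ofReal (exp (-(r * x)))
      = ENNReal.ofReal (1/2) * exponentialPDF (2*r) x := by
  rcases le_or_gt 0 x with hx | hx
  · rw [exponentialPDF_of_nonneg hx, exponentialPDF_of_nonneg hx,
      ← ENNReal.ofReal_mul (by positivity), ← ENNReal.ofReal_mul (by norm_num)]
    congr 1
    have h2 : rexp (-(2*r*x)) = rexp (-(r*x)) * rexp (-(r*x)) := by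
      rw [← exp_add]; ring_nf
    rw [h2]; ring
  · rw [exponentialPDF_of_neg hx, exponentialPDF_of_neg hx]
    simp

lemma sde_lintegral_exp_neg_expMeasure {r : ℝ} (hr : 0 < r) :
    ∫⁻ x, ENNReal.ofReal (exp (-(r * x))) ∂(expMeasure r) = ENNReal.ofReal (1/2) := by
  have hmg : Measurable fun x : ℝ => ENNReal.ofReal (exp (-(r * x))) :=
    (((measurable_id'.const_mul r).neg).exp).ennreal_ofReal
  have hpdf : Measurable (exponentialPDF r) := (measurable_exponentialPDFReal r).ennreal_ofReal
  have hepdf : gammaPDF 1 r = exponentialPDF r := rfl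
  rw [expMeasure, gammaMeasure, hepdf, lintegral_withDensity_eq_lintegral_mul _ hpdf hmg]
  have hptw : ∀ x : ℝ, (exponentialPDF r * fun x => ENNReal.ofReal (exp (-(r * x)))) x
      = ENNReal.ofReal (1/2) * exponentialPDF (2*r) x := fun x => sde_pointwise_exp_pdf hr x
  have hm2 : Measurable (exponentialPDF (2*r)) :=
    (measurable_exponentialPDFReal (2*r)).ennreal_ofReal
  rw [lintegral_congr hptw, lintegral_const_mul _ hm2,
    lintegral_exponentialPDF_eq_one (by linarith), mul_one]

lemma sde_lintegral_prod_indep {Ω : Type*} [MeasurableSpace Ω] (P : Measure Ω)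
    [IsProbabilityMeasure P]
    (H : ℕ → Ω → ℝ) (hmeas : ∀ k, Measurable (H k))
    (hindep : iIndepFun H P)
    (φ : ℝ → ℝ≥0∞) (hφ : Measurable φ) (N : ℕ) :
    ∫⁻ ω, ∏ k ∈ Finset.range N, φ (H k ω) ∂P
      = ∏ k ∈ Finset.range N, ∫⁻ ω, φ (H k ω) ∂P := by
  induction N with
  | zero => simp
  | succ N ih =>
    have hdisj : Disjoint (Finset.range N) ({N} : Finset ℕ) := by simp
    have hind := hindep.indepFun_finset (Finset.range N) {N} hdisj hmeas
    have hg1 : Measurable fun v : {x // x ∈ Finset.range N} → ℝ =>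
        ∏ i : {x // x ∈ Finset.range N}, φ (v i) :=
      Finset.measurable_prod _ (fun i _ => hφ.comp (measurable_pi_apply i))
    have hg2 : Measurable fun v : {x // x ∈ ({N} : Finset ℕ)} → ℝ =>
        φ (v ⟨N, Finset.mem_singleton_self N⟩) :=
      hφ.comp (measurable_pi_apply _)
    have hind2 : IndepFun (fun ω => ∏ k ∈ Finset.range N, φ (H k ω))
        (fun ω => φ (H N ω)) P := by
      have h2 := hind.comp hg1 hg2
      convert h2 using 2 with ω
      exact (Finset.prod_coe_sort (Finset.range N) (fun k => φ (H k ω))).symm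
      rfl
    have hmf : Measurable fun ω => ∏ k ∈ Finset.range N, φ (H k ω) :=
      Finset.measurable_prod _ (fun i _ => hφ.comp (hmeas i))
    have hmg : Measurable fun ω => φ (H N ω) := hφ.comp (hmeas N)
    calc ∫⁻ ω, ∏ k ∈ Finset.range (N+1), φ (H k ω) ∂P
        = ∫⁻ ω, ((fun ω => ∏ k ∈ Finset.range N, φ (H k ω)) * fun ω => φ (H N ω)) ω ∂P := by
          apply lintegral_congr; intro ω; simp [Finset.prod_range_succ]
      _ = (∫⁻ ω, ∏ k ∈ Finset.range N, φ (H k ω) ∂P) * ∫⁻ ω, φ (H N ω) ∂P :=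
          lintegral_mul_eq_lintegral_mul_lintegral_of_indepFun hmf hmg hind2
      _ = ∏ k ∈ Finset.range (N+1), ∫⁻ ω, φ (H k ω) ∂P := by
          rw [ih, Finset.prod_range_succ]

lemma sde_chernoff_jumpTime {Ω : Type*} [MeasurableSpace Ω] (P : Measure Ω)
    [IsProbabilityMeasure P] {r : ℝ} (hr : 0 < r)
    (H : ℕ → Ω → ℝ) (hmeas : ∀ k, Measurable (H k))
    (hindep : iIndepFun H P)
    (hdist : ∀ k, Measure.map (H k) P = expMeasure r)
    (T : ℝ) (N : ℕ) :
    P {ω | jumpTime H N ω ≤ T} ≤ ENNReal.ofReal (exp (r * T) * (1/2)^N) := by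
  set G : Ω → ℝ≥0∞ := fun ω => ENNReal.ofReal (exp (-(r * jumpTime H N ω))) with hG
  have hjm : Measurable (fun ω => jumpTime H N ω) := by
    apply Finset.measurable_sum
    exact fun i _ => hmeas i
  have hGm : Measurable G := (((hjm.const_mul r).neg).exp).ennreal_ofReal
  have hsub : {ω | jumpTime H N ω ≤ T} ⊆ {ω | ENNReal.ofReal (exp (-(r * T))) ≤ G ω} := by
    intro ω hω
    have hω' : jumpTime H N ω ≤ T := hω
    exact ENNReal.ofReal_le_ofReal (exp_le_exp.2 (by
      simp only [neg_le_neg_iff]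
      exact mul_le_mul_of_nonneg_left hω' hr.le))
  have hmarkov := mul_meas_ge_le_lintegral₀ (μ := P) hGm.aemeasurable
    (ENNReal.ofReal (exp (-(r * T))))
  have hGint : ∫⁻ ω, G ω ∂P = ENNReal.ofReal (1/2) ^ N := by
    have hptw : ∀ ω, G ω = ∏ k ∈ Finset.range N, ENNReal.ofReal (exp (-(r * H k ω))) := by
      intro ω
      rw [hG]
      have hsum : -(r * jumpTime H N ω) = ∑ i ∈ Finset.range N, (-(r * H i ω)) := by
        rw [jumpTime, Finset.mul_sum]
        exact (Finset.sum_neg_distrib _).symm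
      show ENNReal.ofReal (rexp (-(r * jumpTime H N ω))) = _
      rw [hsum, Real.exp_sum, ENNReal.ofReal_prod_of_nonneg (fun i _ => (exp_pos _).le)]
    calc ∫⁻ ω, G ω ∂P = ∫⁻ ω, ∏ k ∈ Finset.range N, ENNReal.ofReal (exp (-(r * H k ω))) ∂P :=
          lintegral_congr hptw
      _ = ∏ k ∈ Finset.range N, ∫⁻ ω, ENNReal.ofReal (exp (-(r * H k ω))) ∂P :=
          sde_lintegral_prod_indep P H hmeas hindep _
            (((measurable_id'.const_mul r).neg).exp).ennreal_ofReal N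
      _ = ∏ k ∈ Finset.range N, ENNReal.ofReal (1/2) := by
          apply Finset.prod_congr rfl
          intro k _
          rw [← lintegral_map (f := fun x : ℝ => ENNReal.ofReal (exp (-(r * x)))) (((measurable_id'.const_mul r).neg).exp).ennreal_ofReal (hmeas k),
            hdist k]
          exact sde_lintegral_exp_neg_expMeasure hr
      _ = ENNReal.ofReal (1/2) ^ N := by rw [Finset.prod_const, Finset.card_range]
  have key : ENNReal.ofReal (exp (-(r * T))) * P {ω | jumpTime H N ω ≤ T}
      ≤ ENNReal.ofReal (1/2) ^ N := by
    calc ENNReal.ofReal (exp (-(r * T))) * P {ω | jumpTime H N ω ≤ T}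
        ≤ ENNReal.ofReal (exp (-(r * T))) * P {ω | ENNReal.ofReal (exp (-(r * T))) ≤ G ω} :=
          mul_le_mul_right (measure_mono hsub) _
      _ ≤ ∫⁻ ω, G ω ∂P := hmarkov
      _ = ENNReal.ofReal (1/2) ^ N := hGint
  calc P {ω | jumpTime H N ω ≤ T}
      = ENNReal.ofReal (exp (r * T)) *
        (ENNReal.ofReal (exp (-(r * T))) * P {ω | jumpTime H N ω ≤ T}) := by
        rw [← mul_assoc, ← ENNReal.ofReal_mul (exp_pos _).le, ← exp_add]
        simp
    _ ≤ ENNReal.ofReal (exp (r * T)) * ENNReal.ofReal (1/2) ^ N := mul_le_mul_right key _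
    _ = ENNReal.ofReal (exp (r * T) * (1/2)^N) := by
        rw [ENNReal.ofReal_mul (exp_pos _).le, ENNReal.ofReal_pow (by norm_num)]

end AuxProbability

section AuxLimit

open Real Set Filter
open scoped Topology

lemma sde_bound_tendsto_aux (T η : ℝ) (hT : 0 < T) (hη : 0 < η) :
    Tendsto (fun r : ℝ => (⌈3*(T+1) * r⌉₊ : ℝ) * exp (-(r * η))
      + exp (r*T) * (1/2)^(⌈3*(T+1) * r⌉₊)) atTop (𝓝 0) := by
  have hmul : Tendsto (fun r : ℝ => η * r) atTop atTop :=
    Tendsto.const_mul_atTop hη tendsto_id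
  have h1 : Tendsto (fun x : ℝ => x * exp (-x)) atTop (𝓝 0) := by
    simpa using tendsto_pow_mul_exp_neg_atTop_nhds_zero 1
  have h2 : Tendsto (fun r : ℝ => (η * r) * exp (-(η * r))) atTop (𝓝 0) := h1.comp hmul
  have h3 : Tendsto (fun r : ℝ => r * exp (-(η * r))) atTop (𝓝 0) := by
    have := h2.const_mul (1/η)
    rw [mul_zero] at this
    refine this.congr (fun r => ?_)
    field_simp
  have h4 : Tendsto (fun r : ℝ => exp (-(η * r))) atTop (𝓝 0) :=
    tendsto_exp_neg_atTop_nhds_zero.comp hmul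
  have h5 : Tendsto (fun r : ℝ => exp (-r)) atTop (𝓝 0) := tendsto_exp_neg_atTop_nhds_zero
  have hg : Tendsto (fun r : ℝ => 3*(T+1) * (r * exp (-(η * r))) + exp (-(η * r)) + exp (-r))
      atTop (𝓝 0) := by
    have := ((h3.const_mul (3*(T+1))).add h4).add h5
    simpa using this
  apply squeeze_zero'
    (g := fun r : ℝ => 3*(T+1) * (r * exp (-(η * r))) + exp (-(η * r)) + exp (-r))
  · filter_upwards [eventually_ge_atTop (0:ℝ)] with r hr
    positivity
  · filter_upwards [eventually_ge_atTop (0:ℝ)] with r hr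
    have hx : (0:ℝ) ≤ 3*(T+1)*r := by positivity
    have hceil : (⌈3*(T+1) * r⌉₊ : ℝ) < 3*(T+1)*r + 1 := Nat.ceil_lt_add_one hx
    have hceil2 : 3*(T+1)*r ≤ (⌈3*(T+1) * r⌉₊ : ℝ) := Nat.le_ceil _
    have hterm1 : (⌈3*(T+1) * r⌉₊ : ℝ) * exp (-(r * η))
        ≤ 3*(T+1) * (r * exp (-(η * r))) + exp (-(η * r)) := by
      have hrη : r * η = η * r := mul_comm _ _
      rw [hrη]
      nlinarith [exp_pos (-(η * r)), (exp_pos (-(η * r))).le,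
        mul_le_mul_of_nonneg_right hceil.le (exp_pos (-(η * r))).le]
    have hterm2 : exp (r*T) * (1/2)^(⌈3*(T+1) * r⌉₊) ≤ exp (-r) := by
      set N := ⌈3*(T+1) * r⌉₊
      have hexp23 : exp (2/3 : ℝ) ≤ 2 := by
        have hlog : (2/3:ℝ) ≤ Real.log 2 := by nlinarith [Real.log_two_gt_d9]
        calc exp (2/3:ℝ) ≤ exp (Real.log 2) := exp_le_exp.2 hlog
          _ = 2 := Real.exp_log two_pos
      have hhalf : (1/2 : ℝ) ≤ exp (-(2/3)) := by
        rw [exp_neg, one_div]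
        exact inv_anti₀ (exp_pos _) hexp23
      have hpow : (1/2:ℝ)^N ≤ exp (-(2/3:ℝ)) ^ N := pow_le_pow_left₀ (by norm_num) hhalf N
      have hpow2 : exp (-(2/3:ℝ)) ^ N = exp ((N:ℝ) * (-(2/3))) := (Real.exp_nat_mul _ N).symm
      calc exp (r*T) * (1/2)^N ≤ exp (r*T) * exp ((N:ℝ) * (-(2/3))) := by
            rw [← hpow2]
            exact mul_le_mul_of_nonneg_left hpow (exp_pos _).le
        _ = exp (r*T + (N:ℝ) * (-(2/3))) := (exp_add _ _).symm
        _ ≤ exp (-r) := exp_le_exp.2 (by nlinarith)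
    linarith
  · exact hg

end AuxLimit

section AuxDet

open Real Set

variable {Ω E : Type*} [NormedAddCommGroup E] [NormedSpace ℝ E]

lemma sde_gronwallBound_mono_x {K ε x T : ℝ} (hK : 0 ≤ K) (hε : 0 ≤ ε) (hx0 : 0 ≤ x)
    (hxT : x ≤ T) : gronwallBound 0 K ε x ≤ gronwallBound 0 K ε T := by
  by_cases h : K = 0
  · subst h; rw [gronwallBound_K0]; simp only [zero_add]; nlinarith
  · rw [gronwallBound_of_K_ne_0 h]
    have hK' : 0 < K := lt_of_le_of_ne hK (Ne.symm h)
    have h1 : exp (K*x) ≤ exp (K*T) := exp_le_exp.2 (mul_le_mul_of_nonneg_left hxT hK)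
    have hdiv : (0:ℝ) ≤ ε / K := div_nonneg hε hK
    simp only [zero_mul, zero_add]
    nlinarith

/-- Key deterministic estimate: on a "good" sample, the Euler path stays
Grönwall-close to the ODE solution. -/
lemma sde_euler_dist_le
    (f : E → E) (L : ℝ≥0) (hLip : LipschitzWith L f) (M : ℝ) (hM : ∀ v, ‖f v‖ ≤ M)
    (u0 : E) (u : ℝ → E) (hu0 : u 0 = u0)
    (hu : ∀ t : ℝ, 0 ≤ t → HasDerivWithinAt u (f (u t)) (Set.Ici 0) t)
    (H : ℕ → Ω → ℝ) (ω : Ω) (T η : ℝ) (hη : 0 < η) (N : ℕ)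
    (pos : ∀ k, 0 < H k ω) (small : ∀ k, k < N → H k ω ≤ η)
    (big : T < jumpTime H N ω)
    (W : ℝ → E) (hWc : ContinuousOn W (Icc 0 T))
    (hW : ∀ s : ℝ, 0 ≤ s → W s = eulerPath f u0 H s ω) :
    ∀ t ∈ Icc (0:ℝ) T, dist (W t) (u t) ≤ gronwallBound 0 L (L * (M * η)) t := by
  have jt_mono : ∀ {j k : ℕ}, j ≤ k → jumpTime H j ω ≤ jumpTime H k ω := by
    intro j k hjk
    apply Finset.sum_le_sum_of_subset_of_nonneg (Finset.range_subset_range.2 hjk)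
    exact fun i _ _ => (pos i).le
  have jt_succ : ∀ k, jumpTime H (k+1) ω = jumpTime H k ω + H k ω := by
    intro k; rw [jumpTime, jumpTime, Finset.sum_range_succ]
  have jt_zero : jumpTime H 0 ω = 0 := Finset.sum_range_zero _
  have jc_eq : ∀ (s : ℝ) (k : ℕ), jumpTime H k ω ≤ s → s < jumpTime H (k+1) ω →
      jumpCount H s ω = k := by
    intro s k h1 h2
    have hub : ∀ j ∈ {j | jumpTime H j ω ≤ s}, j ≤ k := by
      intro j hj
      by_contra hc
      push_neg at hc
      exact absurd ((jt_mono hc).trans hj) (not_le.2 h2)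
    have hbdd : BddAbove {j | jumpTime H j ω ≤ s} := ⟨k, hub⟩
    exact le_antisymm (csSup_le ⟨k, h1⟩ hub) (le_csSup hbdd h1)
  have MK : (0:ℝ) ≤ M := le_trans (norm_nonneg _) (hM u0)
  have key : ∀ s : ℝ, 0 ≤ s → s < jumpTime H N ω →
      jumpTime H (jumpCount H s ω) ω ≤ s ∧ s < jumpTime H (jumpCount H s ω + 1) ω ∧
        jumpCount H s ω < N := by
    intro s hs0 hsN
    have h0S : (0:ℕ) ∈ {j | jumpTime H j ω ≤ s} := by simp [jt_zero, hs0]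
    have hub : ∀ j ∈ {j | jumpTime H j ω ≤ s}, j ≤ N := by
      intro j hj
      by_contra hc
      push_neg at hc
      exact absurd ((jt_mono hc.le).trans hj) (not_le.2 hsN)
    have hbdd : BddAbove {j | jumpTime H j ω ≤ s} := ⟨N, hub⟩
    have hmem := Nat.sSup_mem ⟨0, h0S⟩ hbdd
    have hmem' : jumpTime H (jumpCount H s ω) ω ≤ s := hmem
    have hlt : s < jumpTime H (jumpCount H s ω + 1) ω := by
      by_contra hc
      push_neg at hc
      have h2 : jumpCount H s ω + 1 ≤ jumpCount H s ω := le_csSup hbdd hc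
      omega
    have hKN : jumpCount H s ω < N := by
      by_contra hc
      push_neg at hc
      exact absurd ((jt_mono hc).trans hmem') (not_le.2 hsN)
    exact ⟨hmem', hlt, hKN⟩
  have hderiv : ∀ t ∈ Ico (0:ℝ) T,
      HasDerivWithinAt W (f (eulerChain f u0 H (jumpCount H t ω) ω)) (Ici t) t := by
    intro t ht
    obtain ⟨h1, h2, h3⟩ := key t ht.1 (ht.2.trans big)
    set k := jumpCount H t ω with hk
    set c := f (eulerChain f u0 H k ω) with hc
    have hA : HasDerivAt (fun s => eulerChain f u0 H k ω + (s - jumpTime H k ω) • c) c t := by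
      have := (((hasDerivAt_id t).sub_const (jumpTime H k ω)).smul_const c).const_add
        (eulerChain f u0 H k ω)
      simpa using this
    have hmem2 : Ico t (jumpTime H (k+1) ω) ∈ nhdsWithin t (Ici t) :=
      Ico_mem_nhdsGE h2
    have heq : ∀ s ∈ Ico t (jumpTime H (k+1) ω),
        W s = eulerChain f u0 H k ω + (s - jumpTime H k ω) • c := by
      intro s hs
      have hs0 : 0 ≤ s := ht.1.trans hs.1
      have hjc : jumpCount H s ω = k := jc_eq s k (h1.trans hs.1) hs.2
      rw [hW s hs0, eulerPath, hjc]
    exact (hA.hasDerivWithinAt).congr_of_eventuallyEq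
      (Filter.eventuallyEq_of_mem hmem2 heq) (heq t ⟨le_rfl, h2⟩)
  have fbound : ∀ t ∈ Ico (0:ℝ) T,
      dist (f (eulerChain f u0 H (jumpCount H t ω) ω)) (f (W t)) ≤ L * (M * η) := by
    intro t ht
    obtain ⟨h1, h2, h3⟩ := key t ht.1 (ht.2.trans big)
    set k := jumpCount H t ω with hk
    set c := f (eulerChain f u0 H k ω) with hc
    have hWt : W t = eulerChain f u0 H k ω + (t - jumpTime H k ω) • c := by
      rw [hW t ht.1, eulerPath]
    have hd : dist (eulerChain f u0 H k ω) (W t) ≤ M * η := by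
      rw [hWt, dist_comm, dist_eq_norm, add_sub_cancel_left, norm_smul]
      have habs : |t - jumpTime H k ω| ≤ η := by
        rw [abs_of_nonneg (by linarith)]
        have := jt_succ k
        have hsm := small k h3
        linarith
      calc ‖t - jumpTime H k ω‖ * ‖c‖ ≤ η * M := by
            apply mul_le_mul habs (hM _) (norm_nonneg _) hη.le
        _ = M * η := mul_comm _ _
    calc dist (f (eulerChain f u0 H k ω)) (f (W t))
        ≤ L * dist (eulerChain f u0 H k ω) (W t) := hLip.dist_le_mul _ _
      _ ≤ L * (M * η) := by
          apply mul_le_mul_of_nonneg_left hd (L.coe_nonneg)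
  have hg' : ∀ t ∈ Ico (0:ℝ) T, HasDerivWithinAt u (f (u t)) (Ici t) t := fun t ht =>
    (hu t ht.1).mono (Ici_subset_Ici.2 ht.1)
  have hgc : ContinuousOn u (Icc 0 T) := fun t ht =>
    ((hu t ht.1).continuousWithinAt).mono (fun s hs => hs.1)
  have ha : dist (W 0) (u 0) ≤ 0 := by
    have hjc0 : jumpCount H 0 ω = 0 := by
      apply jc_eq 0 0 (le_of_eq jt_zero)
      rw [jt_succ 0, jt_zero, zero_add]
      exact pos 0
    have hW0 : W 0 = u0 := by
      rw [hW 0 le_rfl, eulerPath, hjc0, jt_zero]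
      simp [eulerChain]
    rw [hW0, hu0, dist_self]
  have main := dist_le_of_approx_trajectories_ODE (v := fun _ x => f x) (K := L)
    (fun _ => hLip) hWc hderiv fbound hgc hg'
    (fun t _ => by rw [dist_self]) ha
  intro t ht
  have := main t ht
  simpa using this

end AuxDet

/-- Weak convergence of the stochastic Euler dynamics to the ODE solution as `h ↓ 0`,
for bounded Lipschitz `f`: for every bounded continuous functional `F` on
`C([0,∞); ℝ^d)` (compact-open topology), `𝔼[F(V_h)] → F(u)`. -/
theorem stmt6 (d : ℕ) {Ω : Type*} [MeasurableSpace Ω] (P : Measure Ω) [IsProbabilityMeasure P]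
    [MeasurableSpace C(ℝ≥0, EuclideanSpace ℝ (Fin d))]
    [BorelSpace C(ℝ≥0, EuclideanSpace ℝ (Fin d))]
    (f : EuclideanSpace ℝ (Fin d) → EuclideanSpace ℝ (Fin d))
    (L : ℝ≥0) (hLip : LipschitzWith L f) (hbdd : ∃ M : ℝ, ∀ v, ‖f v‖ ≤ M)
    (u0 : EuclideanSpace ℝ (Fin d))
    -- the ODE solution `u' = f(u)`, `u(0) = u₀`, as a function and as a continuous path
    (u : ℝ → EuclideanSpace ℝ (Fin d)) (hu0 : u 0 = u0)
    (hu : ∀ t : ℝ, 0 ≤ t → HasDerivWithinAt u (f (u t)) (Set.Ici 0) t)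
    (uC : C(ℝ≥0, EuclideanSpace ℝ (Fin d))) (huC : ∀ t : ℝ≥0, uC t = u t)
    -- for each `h > 0`, i.i.d. exponential timesteps with mean `h`
    (H : ℝ → ℕ → Ω → ℝ)
    (hHmeas : ∀ h : ℝ, 0 < h → ∀ k, Measurable (H h k))
    (hHindep : ∀ h : ℝ, 0 < h → iIndepFun (H h) P)
    (hHdist : ∀ h : ℝ, 0 < h → ∀ k, Measure.map (H h k) P = expMeasure h⁻¹)
    -- the stochastic Euler dynamics, as a random continuous path
    (V : ℝ → Ω → C(ℝ≥0, EuclideanSpace ℝ (Fin d)))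
    (hVmeas : ∀ h : ℝ, 0 < h → Measurable (V h))
    (hV : ∀ h : ℝ, 0 < h → ∀ ω, ∀ t : ℝ≥0, V h ω t = eulerPath f u0 (H h) (t : ℝ) ω) :
    ∀ F : C(ℝ≥0, EuclideanSpace ℝ (Fin d)) → ℝ, Continuous F → (∃ M : ℝ, ∀ x, |F x| ≤ M) →
      Filter.Tendsto (fun h : ℝ => ∫ ω, F (V h ω) ∂P)
        (nhdsWithin 0 (Set.Ioi 0)) (nhds (F uC)) := by
  classical
  intro F hFcont hFbdd
  obtain ⟨M, hM⟩ := hbdd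
  have hM0 : (0:ℝ) ≤ M := le_trans (norm_nonneg _) (hM u0)
  obtain ⟨MF0, hMF0⟩ := hFbdd
  set MF : ℝ := max MF0 1 with hMFdef
  have hMF : ∀ x, |F x| ≤ MF := fun x => (hMF0 x).trans (le_max_left _ _)
  have hMFpos : (0:ℝ) < MF := lt_of_lt_of_le one_pos (le_max_right _ _)
  rw [Metric.tendsto_nhds]
  intro ε hε
  -- a basic neighborhood of `uC` on which `F` varies by at most `ε/3`
  have hball : F ⁻¹' Metric.ball (F uC) (ε/3) ∈ nhds uC :=
    hFcont.continuousAt.preimage_mem_nhds (Metric.ball_mem_nhds _ (by positivity))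
  have hbasis := nhds_basis_uniformity' (x := uC)
    (ContinuousMap.hasBasis_compactConvergenceUniformity
      (α := ℝ≥0) (β := EuclideanSpace ℝ (Fin d)))
  rw [hbasis.mem_iff] at hball
  obtain ⟨⟨Kset, Vent⟩, ⟨hKc, hVent⟩, hsub⟩ := hball
  obtain ⟨δ, hδpos, hδsub⟩ := Metric.mem_uniformity_dist.1 hVent
  -- time horizon
  obtain ⟨T₀, hT₀⟩ := hKc.bddAbove
  set T : ℝ := (T₀:ℝ) + 1 with hTdef
  have hT : 0 < T := by positivity
  -- choice of η
  have hgb : ∀ᶠ x in nhds (0:ℝ), gronwallBound 0 L x T < δ := by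
    have hcont := (gronwallBound_continuous_ε 0 L T).tendsto 0
    rw [gronwallBound_ε0_δ0] at hcont
    exact hcont.eventually (gt_mem_nhds hδpos)
  rw [Metric.eventually_nhds_iff] at hgb
  obtain ⟨ε₀, hε₀pos, hε₀⟩ := hgb
  set η : ℝ := ε₀ / (2*((L:ℝ)*M+1)) with hηdef
  have hηpos : 0 < η := by positivity
  have hLMη : (L:ℝ)*(M*η) < ε₀ := by
    have h1 : (L:ℝ)*(M*η) = ((L:ℝ)*M)*η := by ring
    have h2 : ((L:ℝ)*M)*η ≤ ((L:ℝ)*M+1)*η :=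
      mul_le_mul_of_nonneg_right (by linarith) hηpos.le
    have h3 : ((L:ℝ)*M+1)*η = ε₀/2 := by
      rw [hηdef]; field_simp
    linarith
  have hLMηnn : (0:ℝ) ≤ (L:ℝ)*(M*η) := by positivity
  have hgbη : gronwallBound 0 L ((L:ℝ)*(M*η)) T < δ := by
    apply hε₀
    rw [Real.dist_eq, sub_zero, abs_of_nonneg hLMηnn]
    exact hLMη
  -- number of steps and bad events
  set Nh : ℝ → ℕ := fun h => ⌈3*(T+1) * h⁻¹⌉₊ with hNhdef
  set Ebad : ℝ → Set Ω := fun h =>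
    (⋃ k, {ω | H h k ω ≤ 0}) ∪
      ((⋃ k ∈ Finset.range (Nh h), {ω | η < H h k ω}) ∪
        {ω | jumpTime (H h) (Nh h) ω ≤ T}) with hEdef
  have hEmeas : ∀ h : ℝ, 0 < h → MeasurableSet (Ebad h) := by
    intro h hp
    apply MeasurableSet.union
    · exact MeasurableSet.iUnion fun k => measurableSet_le (hHmeas h hp k) measurable_const
    apply MeasurableSet.union
    · exact MeasurableSet.iUnion fun k => MeasurableSet.iUnion fun _ =>
        measurableSet_lt measurable_const (hHmeas h hp k)
    · exact measurableSet_le (Finset.measurable_sum _ fun i _ => hHmeas h hp i) measurable_const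
  -- probability bound for the bad event
  set bound : ℝ → ℝ := fun h => (Nh h : ℝ) * Real.exp (-(h⁻¹ * η))
      + Real.exp (h⁻¹*T) * (1/2)^(Nh h) with hbounddef
  have hPbound : ∀ h : ℝ, 0 < h → (P (Ebad h)).toReal ≤ bound h := by
    intro h hp
    have hr : 0 < h⁻¹ := by positivity
    have hA : P (⋃ k, {ω | H h k ω ≤ 0}) = 0 := by
      apply measure_iUnion_null
      intro k
      have hpre : {ω | H h k ω ≤ 0} = H h k ⁻¹' (Set.Iic 0) := rfl
      rw [hpre, ← Measure.map_apply (hHmeas h hp k) measurableSet_Iic, hHdist h hp k]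
      exact sde_expMeasure_Iic_zero hr
    have hB : P (⋃ k ∈ Finset.range (Nh h), {ω | η < H h k ω})
        ≤ (Nh h : ENNReal) * ENNReal.ofReal (Real.exp (-(h⁻¹ * η))) := by
      calc P (⋃ k ∈ Finset.range (Nh h), {ω | η < H h k ω})
          ≤ ∑ k ∈ Finset.range (Nh h), P {ω | η < H h k ω} :=
            measure_biUnion_finset_le _ _
        _ = ∑ k ∈ Finset.range (Nh h), ENNReal.ofReal (Real.exp (-(h⁻¹ * η))) := by
            apply Finset.sum_congr rfl
            intro k _
            have hpre : {ω | η < H h k ω} = H h k ⁻¹' (Set.Ioi η) := rfl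
            rw [hpre, ← Measure.map_apply (hHmeas h hp k) measurableSet_Ioi, hHdist h hp k]
            exact sde_expMeasure_Ioi hr hηpos.le
        _ = (Nh h : ENNReal) * ENNReal.ofReal (Real.exp (-(h⁻¹ * η))) := by
            rw [Finset.sum_const, Finset.card_range, nsmul_eq_mul]
    have hC := sde_chernoff_jumpTime P hr (H h) (hHmeas h hp) (hHindep h hp)
      (hHdist h hp) T (Nh h)
    have htotal : P (Ebad h) ≤ ENNReal.ofReal (bound h) := by
      calc P (Ebad h)
          ≤ P (⋃ k, {ω | H h k ω ≤ 0}) +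
            ((Nh h : ENNReal) * ENNReal.ofReal (Real.exp (-(h⁻¹ * η))) +
              ENNReal.ofReal (Real.exp (h⁻¹ * T) * (1/2)^(Nh h))) := by
            refine (measure_union_le _ _).trans ?_
            apply add_le_add le_rfl
            refine (measure_union_le _ _).trans ?_
            exact add_le_add hB hC
        _ = ENNReal.ofReal (bound h) := by
            rw [hA, zero_add]
            rw [← ENNReal.ofReal_natCast (Nh h),
              ← ENNReal.ofReal_mul (by positivity),
              ← ENNReal.ofReal_add (by positivity) (by positivity)]
    exact ENNReal.toReal_le_of_le_ofReal (by positivity) htotal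
  -- the bound tends to zero
  have hbt : Filter.Tendsto bound (nhdsWithin 0 (Set.Ioi 0)) (nhds 0) := by
    have := (sde_bound_tendsto_aux T η hT hηpos).comp tendsto_inv_nhdsGT_zero
    simpa [hbounddef, hNhdef, Function.comp_def] using this
  have hsmall : ∀ᶠ h in nhdsWithin 0 (Set.Ioi 0), bound h < ε/(6*MF) :=
    hbt.eventually (gt_mem_nhds (by positivity))
  filter_upwards [hsmall, self_mem_nhdsWithin] with h hboundh hhmem
  have hp : 0 < h := hhmem
  -- good samples are close to the ODE solution
  have hgood : ∀ ω, ω ∉ Ebad h → |F (V h ω) - F uC| ≤ ε/3 := by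
    intro ω hω
    rw [hEdef] at hω
    simp only [Set.mem_union, Set.mem_iUnion, Set.mem_setOf_eq, not_or, not_exists,
      not_le, not_lt] at hω
    obtain ⟨hA, hB, hC⟩ := hω
    have pos : ∀ k, 0 < H h k ω := hA
    have small : ∀ k, k < Nh h → H h k ω ≤ η := by
      intro k hk
      exact hB k (Finset.mem_range.2 hk)
    have big : T < jumpTime (H h) (Nh h) ω := hC
    set W : ℝ → EuclideanSpace ℝ (Fin d) := fun s => V h ω (Real.toNNReal s) with hWdef
    have hWc : ContinuousOn W (Set.Icc 0 T) :=
      ((V h ω).continuous.comp continuous_real_toNNReal).continuousOn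
    have hWeq : ∀ s : ℝ, 0 ≤ s → W s = eulerPath f u0 (H h) s ω := by
      intro s hs
      have := hV h hp ω (Real.toNNReal s)
      rwa [Real.coe_toNNReal s hs] at this
    have hdist := sde_euler_dist_le f L hLip M hM u0 u hu0 hu (H h) ω T η hηpos (Nh h)
      pos small big W hWc hWeq
    have hmem : V h ω ∈ F ⁻¹' Metric.ball (F uC) (ε/3) := by
      apply hsub
      intro x hx
      apply hδsub
      have hxT : (x:ℝ) ∈ Set.Icc (0:ℝ) T := by
        constructor
        · exact x.coe_nonneg
        · have hxle : x ≤ T₀ := hT₀ hx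
          rw [hTdef]
          have : (x:ℝ) ≤ (T₀:ℝ) := hxle
          linarith
      have h1 := hdist (x:ℝ) hxT
      have h2 : gronwallBound 0 L ((L:ℝ)*(M*η)) (x:ℝ) ≤ gronwallBound 0 L ((L:ℝ)*(M*η)) T :=
        sde_gronwallBound_mono_x L.coe_nonneg hLMηnn x.coe_nonneg hxT.2
      have hWx : W (x:ℝ) = V h ω x := by
        rw [hWdef]
        simp [Real.toNNReal_coe]
      have huCx : uC x = u (x:ℝ) := huC x
      show dist (uC x) (V h ω x) < δ
      rw [huCx, ← hWx, dist_comm]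
      calc dist (W (x:ℝ)) (u (x:ℝ)) ≤ gronwallBound 0 L ((L:ℝ)*(M*η)) (x:ℝ) := h1
        _ ≤ gronwallBound 0 L ((L:ℝ)*(M*η)) T := h2
        _ < δ := hgbη
    have : dist (F (V h ω)) (F uC) < ε/3 := hmem
    rw [Real.dist_eq] at this
    linarith
  -- integral estimate
  set g : Ω → ℝ := fun ω => F (V h ω) - F uC with hgdef
  have hFVmeas : Measurable fun ω => F (V h ω) := hFcont.measurable.comp (hVmeas h hp)
  have hFVint : Integrable (fun ω => F (V h ω)) P :=
    ⟨hFVmeas.aestronglyMeasurable,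
      HasFiniteIntegral.of_bounded (C := MF)
        (Filter.Eventually.of_forall fun ω => by
          simpa [Real.norm_eq_abs] using hMF (V h ω))⟩
  have hgint : Integrable g P := hFVint.sub (integrable_const _)
  have hgabs : ∀ ω, |g ω| ≤ 2*MF := by
    intro ω
    have h1 := hMF (V h ω)
    have h2 := hMF uC
    have h3 : |F (V h ω) - F uC| ≤ |F (V h ω)| + |F uC| := by
      have := norm_sub_le (F (V h ω)) (F uC)
      simpa [Real.norm_eq_abs] using this
    rw [hgdef]
    simp only []
    linarith
  have hint_eq : (∫ ω, F (V h ω) ∂P) - F uC = ∫ ω, g ω ∂P := by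
    rw [hgdef, integral_sub hFVint (integrable_const _), integral_const]
    simp [measure_univ]
  have habs : |∫ ω, g ω ∂P| ≤ ∫ ω, |g ω| ∂P := by
    have := norm_integral_le_integral_norm (μ := P) g
    simpa [Real.norm_eq_abs] using this
  have hsplit : ∫ ω, |g ω| ∂P
      = (∫ ω in Ebad h, |g ω| ∂P) + ∫ ω in (Ebad h)ᶜ, |g ω| ∂P :=
    (integral_add_compl (hEmeas h hp) hgint.abs).symm
  have hP1 : (P (Ebad h)).toReal ≤ bound h := hPbound h hp
  have hpiece1 : (∫ ω in Ebad h, |g ω| ∂P) ≤ 2*MF * (P (Ebad h)).toReal := by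
    have := norm_setIntegral_le_of_norm_le_const (μ := P) (s := Ebad h)
      (C := 2*MF) (f := fun ω => |g ω|) (measure_lt_top _ _)
      (fun x _ => by simpa [Real.norm_eq_abs, abs_abs] using hgabs x)
    calc (∫ ω in Ebad h, |g ω| ∂P) ≤ |∫ ω in Ebad h, |g ω| ∂P| := le_abs_self _
      _ ≤ 2*MF * (P (Ebad h)).toReal := by simpa [Real.norm_eq_abs, measureReal_def] using this
  have hpiece2 : (∫ ω in (Ebad h)ᶜ, |g ω| ∂P) ≤ (ε/3) * (P (Ebad h)ᶜ).toReal := by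
    have := norm_setIntegral_le_of_norm_le_const (μ := P) (s := (Ebad h)ᶜ)
      (C := ε/3) (f := fun ω => |g ω|) (measure_lt_top _ _)
      (fun x hx => by simpa [Real.norm_eq_abs, abs_abs] using hgood x hx)
    calc (∫ ω in (Ebad h)ᶜ, |g ω| ∂P) ≤ |∫ ω in (Ebad h)ᶜ, |g ω| ∂P| := le_abs_self _
      _ ≤ (ε/3) * (P (Ebad h)ᶜ).toReal := by simpa [Real.norm_eq_abs, measureReal_def] using this
  have hPc1 : (P (Ebad h)ᶜ).toReal ≤ 1 := by
    have h1 : P (Ebad h)ᶜ ≤ 1 := prob_le_one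
    calc (P (Ebad h)ᶜ).toReal ≤ (1:ENNReal).toReal := ENNReal.toReal_mono (by norm_num) h1
      _ = 1 := by norm_num
  have hfinal : dist (∫ ω, F (V h ω) ∂P) (F uC) < ε := by
    rw [Real.dist_eq, hint_eq]
    have hb1 : 2*MF * (P (Ebad h)).toReal ≤ 2*MF * bound h :=
      mul_le_mul_of_nonneg_left hP1 (by positivity)
    have hb2 : 2*MF * bound h < 2*MF * (ε/(6*MF)) :=
      mul_lt_mul_of_pos_left hboundh (by positivity)
    have hb3 : 2*MF * (ε/(6*MF)) = ε/3 := by field_simp; ring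
    have hb4 : (ε/3) * (P (Ebad h)ᶜ).toReal ≤ ε/3 := by
      calc (ε/3) * (P (Ebad h)ᶜ).toReal ≤ (ε/3) * 1 :=
            mul_le_mul_of_nonneg_left hPc1 (by positivity)
        _ = ε/3 := mul_one _
    calc |∫ ω, g ω ∂P| ≤ ∫ ω, |g ω| ∂P := habs
      _ = (∫ ω in Ebad h, |g ω| ∂P) + ∫ ω in (Ebad h)ᶜ, |g ω| ∂P := hsplit
      _ ≤ 2*MF * (P (Ebad h)).toReal + (ε/3) * (P (Ebad h)ᶜ).toReal :=
          add_le_add hpiece1 hpiece2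
      _ < ε/3 + ε/3 := by
          apply add_lt_add_of_lt_of_le
          · calc 2*MF * (P (Ebad h)).toReal ≤ 2*MF * bound h := hb1
              _ < 2*MF * (ε/(6*MF)) := hb2
              _ = ε/3 := hb3
          · exact hb4
      _ < ε := by linarith
  exact hfinal
end

section
/- Let f : ℝ^d → ℝ^d be Lipschitz continuous, let u_0 ∈ ℝ^d, and let u ∈ C([0,∞); ℝ^d) be the solution of u' = f(u), u(0) = u_0. For each h > 0 let (V_h(t))_{t≥0} be the stochastic Euler dynamics path with stepsize parameter h and initial value u_0; it is a random element of C([0,∞); ℝ^d). Then V_h converges weakly to the deterministic path u as h ↓ 0: for every bounded continuous functional F : C([0,∞); ℝ^d) → ℝ (with respect to the topology of uniform convergence on compact time intervals), lim_{h↓0} 𝔼[F(V_h)] = F(u). -/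
open MeasureTheory ProbabilityTheory
open scoped NNReal

/-!
On the event that all steps are positive, that the steps taken before time `T` is passed are at
most `δ`, and that they do pass `T`, the Euler path is piecewise affine with right derivative
`f (V̂_{K(t)})` and stays within `δ ‖f (V̂_{K(t)})‖` of the current chain value. Grönwall's
inequality, applied once for an a-priori bound and once against `u`, then bounds
`sup_{[0,T]} ‖V_h - u‖` by a quantity that vanishes as `δ → 0`.

With `N = ⌈3T/h⌉`, the complement of that event has probability at most
`e^{T/h} 2^{-N} + N e^{-δ/h}`: a Chernoff bound for `T_N`, using `𝔼 e^{-T_N/h} = 2^{-N}`, plus a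
union bound over the large steps. This tends to `0` as `h ↓ 0`, so `V_h → u` in probability in the
compact-open topology, which yields `𝔼 F(V_h) → F(u)` for bounded continuous `F`.
-/

open Set Filter Topology Real
open scoped ENNReal

section WeakConvergence

variable {Ω : Type*} [MeasurableSpace Ω] {P : Measure Ω} [IsProbabilityMeasure P]

lemma abs_integral_sub_le_of_abs_sub_le {g : Ω → ℝ} (hg : AEStronglyMeasurable g P)
    {c η M : ℝ} {S : Set Ω} (hη : 0 ≤ η) (hM : ∀ ω, |g ω - c| ≤ M)
    (hS : ∀ ω ∉ S, |g ω - c| ≤ η) :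
    |∫ ω, g ω ∂P - c| ≤ η + M * P.real S := by
  set S' := toMeasurable P S
  have hS' : MeasurableSet S' := measurableSet_toMeasurable P S
  have hgc : Integrable (fun ω => g ω - c) P :=
    .of_bound (hg.sub aestronglyMeasurable_const) M (.of_forall hM)
  have hg_int : Integrable g P :=
    (hgc.add (integrable_const c)).congr (.of_forall fun ω => sub_add_cancel (g ω) c)
  have hbound : Integrable (fun ω => η + S'.indicator (fun _ => M) ω) P :=
    (integrable_const η).add ((integrable_const M).indicator hS')
  calc |∫ ω, g ω ∂P - c| = ‖∫ ω, (g ω - c) ∂P‖ := by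
        rw [integral_sub hg_int (integrable_const c)]
        simp
    _ ≤ ∫ ω, (η + S'.indicator (fun _ => M) ω) ∂P := by
        refine norm_integral_le_of_norm_le hbound (.of_forall fun ω => ?_)
        by_cases hω : ω ∈ S'
        · simpa [hω] using (hM ω).trans (le_add_of_nonneg_left hη)
        · simpa [hω] using hS ω fun h => hω (subset_toMeasurable P S h)
    _ = η + M * P.real S := by
        rw [integral_add (integrable_const η) ((integrable_const M).indicator hS'),
          integral_indicator_const M hS', measureReal_def P S', measure_toMeasurable,
          ← measureReal_def]
        simp [mul_comm]

lemma tendsto_integral_comp_of_tendsto_measure_notMem {ι X : Type*} [TopologicalSpace X]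
    {l : Filter ι} {V : ι → Ω → X} {F : X → ℝ} {x₀ : X} {M : ℝ}
    (hFV : ∀ᶠ i in l, AEStronglyMeasurable (fun ω => F (V i ω)) P)
    (hM : ∀ x, |F x| ≤ M) (hF : ContinuousAt F x₀)
    (hV : ∀ U ∈ 𝓝 x₀, Tendsto (fun i => P {ω | V i ω ∉ U}) l (𝓝 0)) :
    Tendsto (fun i => ∫ ω, F (V i ω) ∂P) l (𝓝 (F x₀)) := by
  rw [Metric.tendsto_nhds]
  intro η hη
  set U := F ⁻¹' Metric.closedBall (F x₀) (η / 2)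
  have hU : U ∈ 𝓝 x₀ := hF (Metric.closedBall_mem_nhds _ (by positivity))
  have hsmall : Tendsto (fun i => η / 2 + 2 * M * P.real {ω | V i ω ∉ U}) l
      (𝓝 (η / 2 + 2 * M * 0)) :=
    tendsto_const_nhds.add
      (((ENNReal.tendsto_toReal ENNReal.zero_ne_top).comp (hV U hU)).const_mul _)
  filter_upwards [hFV, hsmall.eventually (gt_mem_nhds (by linarith : η / 2 + 2 * M * 0 < η))]
    with i hi hlt
  refine lt_of_le_of_lt (abs_integral_sub_le_of_abs_sub_le hi (by positivity)
    (fun ω => ?_) (fun ω hω => ?_)) hlt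
  · linarith [abs_sub (F (V i ω)) (F x₀), hM (V i ω), hM x₀]
  · simpa [U, Real.dist_eq] using hω

end WeakConvergence

section JumpTimes

variable {Ω : Type*} {H : ℕ → Ω → ℝ} {ω : Ω}

lemma jumpTime_zero : jumpTime H 0 ω = 0 := Finset.sum_range_zero _

lemma jumpTime_succ (k : ℕ) : jumpTime H (k + 1) ω = jumpTime H k ω + H k ω :=
  Finset.sum_range_succ _ _

lemma jumpTime_strictMono (hpos : ∀ k, 0 < H k ω) : StrictMono (jumpTime H · ω) :=
  strictMono_nat_of_lt_succ fun k => by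
    rw [jumpTime_succ]
    exact lt_add_of_pos_right _ (hpos k)

lemma jumpCount_eq_of_mem_Ico (hpos : ∀ k, 0 < H k ω) {k : ℕ} {t : ℝ}
    (ht : t ∈ Ico (jumpTime H k ω) (jumpTime H (k + 1) ω)) : jumpCount H t ω = k := by
  have hle : ∀ m ∈ {m | jumpTime H m ω ≤ t}, m ≤ k := fun m hm => by
    by_contra! hkm
    exact (((jumpTime_strictMono hpos).monotone hkm).trans hm).not_gt ht.2
  exact le_antisymm (csSup_le ⟨k, ht.1⟩ hle) (le_csSup ⟨k, hle⟩ ht.1)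

lemma jumpCount_mem_Ico (hpos : ∀ k, 0 < H k ω) {t : ℝ} {N : ℕ}
    (ht : t ∈ Ico 0 (jumpTime H N ω)) :
    t ∈ Ico (jumpTime H (jumpCount H t ω) ω) (jumpTime H (jumpCount H t ω + 1) ω) ∧
      jumpCount H t ω < N := by
  have hlt : ∀ m ∈ {m | jumpTime H m ω ≤ t}, m < N := fun m hm => by
    by_contra! hNm
    exact (((jumpTime_strictMono hpos).monotone hNm).trans hm).not_gt ht.2
  have hbdd : BddAbove {m | jumpTime H m ω ≤ t} := ⟨N, fun m hm => (hlt m hm).le⟩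
  have hmem : jumpCount H t ω ∈ {m | jumpTime H m ω ≤ t} :=
    Nat.sSup_mem ⟨0, by simp [jumpTime_zero, ht.1]⟩ hbdd
  refine ⟨⟨hmem, ?_⟩, hlt _ hmem⟩
  by_contra! hsucc
  exact (le_csSup hbdd hsucc).not_gt (Nat.lt_succ_self _)

end JumpTimes

def FineSteps {Ω : Type*} (H : ℕ → Ω → ℝ) (T δ : ℝ) (ω : Ω) : Prop :=
  (∀ k, 0 < H k ω) ∧ ∃ N, T < jumpTime H N ω ∧ ∀ k < N, H k ω ≤ δ

lemma gronwallBound_zero_nonneg {K ε x : ℝ} (hK : 0 ≤ K) (hε : 0 ≤ ε) (hx : 0 ≤ x) :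
    0 ≤ gronwallBound 0 K ε x :=
  (gronwallBound_x0 0 K ε).symm.le.trans (gronwallBound_mono le_rfl hε hK hx)

/-- Here `a` plays the role of `‖f u₀‖`; the inner Grönwall bound is the a-priori bound on
`‖V_h t - u₀‖`. -/
noncomputable def eulerErrorBound (L a T δ : ℝ) : ℝ :=
  gronwallBound 0 L (L * (δ * (2 * a + 2 * L * gronwallBound 0 (2 * L) (2 * a) T))) T

lemma tendsto_eulerErrorBound (L a T : ℝ) : Tendsto (eulerErrorBound L a T) (𝓝 0) (𝓝 0) := by
  have hc : Continuous (eulerErrorBound L a T) :=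
    (gronwallBound_continuous_ε 0 L T).comp (by fun_prop)
  simpa [eulerErrorBound, gronwallBound_ε0_δ0] using hc.tendsto 0

lemma exists_pos_eulerErrorBound_lt (L : ℝ≥0) (a T : ℝ) {ε : ℝ} (hε : 0 < ε) :
    ∃ δ, (L : ℝ) * δ ≤ 1 / 2 ∧ eulerErrorBound L a T δ < ε ∧ 0 < δ := by
  have hsmall : ∀ᶠ δ in 𝓝 0, (L : ℝ) * δ ≤ 1 / 2 ∧ eulerErrorBound L a T δ < ε :=
    ((tendsto_const_nhds.mul tendsto_id).eventually
      (ge_mem_nhds (by norm_num : (L : ℝ) * 0 < 1 / 2))).and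
      ((tendsto_eulerErrorBound _ _ _).eventually (gt_mem_nhds hε))
  obtain ⟨δ, ⟨hδL, hδε⟩, hδ⟩ :=
    ((hsmall.filter_mono nhdsWithin_le_nhds).and (self_mem_nhdsWithin (s := Ioi 0))).exists
  exact ⟨δ, hδL, hδε, hδ⟩

section EulerPath

variable {Ω E : Type*} [NormedAddCommGroup E] [NormedSpace ℝ E] {f : E → E} {u0 : E}
  {H : ℕ → Ω → ℝ} {ω : Ω}

lemma eulerPath_eq_of_mem_Ico (hpos : ∀ k, 0 < H k ω) {k : ℕ} {t : ℝ}
    (ht : t ∈ Ico (jumpTime H k ω) (jumpTime H (k + 1) ω)) :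
    eulerPath f u0 H t ω =
      eulerChain f u0 H k ω + (t - jumpTime H k ω) • f (eulerChain f u0 H k ω) := by
  rw [eulerPath, jumpCount_eq_of_mem_Ico hpos ht]

lemma eulerPath_zero (hpos : ∀ k, 0 < H k ω) : eulerPath f u0 H 0 ω = u0 := by
  have h0 : (0 : ℝ) ∈ Ico (jumpTime H 0 ω) (jumpTime H (0 + 1) ω) := by
    simpa [jumpTime_zero, jumpTime_succ] using hpos 0
  simp [eulerPath_eq_of_mem_Ico hpos h0, eulerChain, jumpTime_zero]

variable {T δ : ℝ}

lemma norm_eulerPath_sub_eulerChain_le (hfine : FineSteps H T δ ω) {t : ℝ}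
    (ht : t ∈ Icc 0 T) :
    ‖eulerPath f u0 H t ω - eulerChain f u0 H (jumpCount H t ω) ω‖ ≤
      δ * ‖f (eulerChain f u0 H (jumpCount H t ω) ω)‖ := by
  obtain ⟨hpos, N, hTN, hδ⟩ := hfine
  obtain ⟨⟨h1, h2⟩, hN⟩ := jumpCount_mem_Ico hpos ⟨ht.1, ht.2.trans_lt hTN⟩
  rw [jumpTime_succ] at h2
  rw [eulerPath, add_sub_cancel_left, norm_smul, Real.norm_of_nonneg (sub_nonneg.2 h1)]
  gcongr
  linarith [hδ _ hN]

lemma hasDerivWithinAt_eulerPath (hfine : FineSteps H T δ ω) {t : ℝ} (ht : t ∈ Ico 0 T) :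
    HasDerivWithinAt (eulerPath f u0 H · ω) (f (eulerChain f u0 H (jumpCount H t ω) ω))
      (Ici t) t := by
  obtain ⟨hpos, N, hTN, -⟩ := hfine
  obtain ⟨hk, -⟩ := jumpCount_mem_Ico hpos ⟨ht.1, ht.2.le.trans_lt hTN⟩
  set k := jumpCount H t ω
  have haff : HasDerivAt (fun s => eulerChain f u0 H k ω + (s - jumpTime H k ω) •
      f (eulerChain f u0 H k ω)) (f (eulerChain f u0 H k ω)) t := by
    simpa using (((hasDerivAt_id t).sub_const (jumpTime H k ω)).smul_const
      (f (eulerChain f u0 H k ω))).const_add (eulerChain f u0 H k ω)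
  refine haff.hasDerivWithinAt.congr_of_eventuallyEq ?_ (eulerPath_eq_of_mem_Ico hpos hk)
  filter_upwards [inter_mem_nhdsWithin (Ici t) (Iio_mem_nhds hk.2)] with s hs
  exact eulerPath_eq_of_mem_Ico hpos ⟨hk.1.trans hs.1, hs.2⟩

variable {L : ℝ≥0}

lemma norm_apply_eulerChain_le (hLip : LipschitzWith L f) (hδL : L * δ ≤ 1 / 2)
    (hfine : FineSteps H T δ ω) {t : ℝ} (ht : t ∈ Icc 0 T) :
    ‖f (eulerChain f u0 H (jumpCount H t ω) ω)‖ ≤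
      2 * ‖f u0‖ + 2 * L * ‖eulerPath f u0 H t ω - u0‖ := by
  set c := eulerChain f u0 H (jumpCount H t ω) ω
  set g := eulerPath f u0 H t ω
  have hfc : ‖f c‖ ≤ ‖f u0‖ + L * ‖c - u0‖ := by
    have := hLip.dist_le_mul c u0
    rw [dist_eq_norm, dist_eq_norm] at this
    linarith [norm_le_norm_add_norm_sub' (f c) (f u0)]
  have hcg : ‖c - u0‖ ≤ ‖g - u0‖ + ‖g - c‖ := by
    simpa using norm_sub_le (g - u0) (g - c)
  have hgc : (L : ℝ) * ‖g - c‖ ≤ 1 / 2 * ‖f c‖ :=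
    calc (L : ℝ) * ‖g - c‖ ≤ L * (δ * ‖f c‖) := by
          gcongr
          exact norm_eulerPath_sub_eulerChain_le hfine ht
      _ = (L * δ) * ‖f c‖ := by ring
      _ ≤ 1 / 2 * ‖f c‖ := by gcongr
  linarith [mul_le_mul_of_nonneg_left hcg L.coe_nonneg]

lemma norm_eulerPath_sub_le (hLip : LipschitzWith L f) (hδL : L * δ ≤ 1 / 2)
    (hfine : FineSteps H T δ ω) (hcont : ContinuousOn (eulerPath f u0 H · ω) (Icc 0 T))
    {t : ℝ} (ht : t ∈ Icc 0 T) :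
    ‖eulerPath f u0 H t ω - u0‖ ≤ gronwallBound 0 (2 * L) (2 * ‖f u0‖) T := by
  have hgronwall := norm_le_gronwallBound_of_norm_deriv_right_le (δ := 0) (K := 2 * L)
    (ε := 2 * ‖f u0‖) (hcont.sub continuousOn_const)
    (fun s hs => (hasDerivWithinAt_eulerPath hfine hs).sub_const u0)
    (by simp [eulerPath_zero hfine.1])
    (fun s hs => by
      have := norm_apply_eulerChain_le (u0 := u0) hLip hδL hfine (Ico_subset_Icc_self hs)
      simp only [Pi.sub_apply]
      linarith)
    t ht
  rw [sub_zero] at hgronwall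
  exact hgronwall.trans (gronwallBound_mono le_rfl (by positivity) (by positivity) ht.2)

theorem dist_eulerPath_le (hLip : LipschitzWith L f) {u : ℝ → E} (hu0 : u 0 = u0)
    (hu : ∀ t : ℝ, 0 ≤ t → HasDerivWithinAt u (f (u t)) (Ici 0) t) (hδ : 0 ≤ δ)
    (hδL : L * δ ≤ 1 / 2)
    (hfine : FineSteps H T δ ω) (hcont : ContinuousOn (eulerPath f u0 H · ω) (Icc 0 T))
    {t : ℝ} (ht : t ∈ Icc 0 T) :
    dist (eulerPath f u0 H t ω) (u t) ≤ eulerErrorBound L ‖f u0‖ T δ := by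
  have hT : 0 ≤ T := ht.1.trans ht.2
  set B := 2 * ‖f u0‖ + 2 * L * gronwallBound 0 (2 * L) (2 * ‖f u0‖) T
  have hB : 0 ≤ B := by
    have := gronwallBound_zero_nonneg (by positivity) (by positivity) hT (K := 2 * L)
      (ε := 2 * ‖f u0‖)
    positivity
  have hdefect : ∀ s ∈ Ico 0 T, dist (f (eulerChain f u0 H (jumpCount H s ω) ω))
      (f (eulerPath f u0 H s ω)) ≤ L * (δ * B) := fun s hs => by
    have hs := Ico_subset_Icc_self hs
    calc _ ≤ L * ‖eulerPath f u0 H s ω - eulerChain f u0 H (jumpCount H s ω) ω‖ := by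
          rw [← dist_eq_norm, dist_comm]
          exact hLip.dist_le_mul _ _
      _ ≤ L * (δ * (2 * ‖f u0‖ + 2 * L * ‖eulerPath f u0 H s ω - u0‖)) := by
          gcongr
          exact (norm_eulerPath_sub_eulerChain_le hfine hs).trans
            (by gcongr; exact norm_apply_eulerChain_le hLip hδL hfine hs)
      _ ≤ L * (δ * B) := by
          gcongr
          show _ ≤ 2 * ‖f u0‖ + 2 * L * gronwallBound 0 (2 * L) (2 * ‖f u0‖) T
          gcongr
          exact norm_eulerPath_sub_le hLip hδL hfine hcont hs
  have hgronwall := dist_le_of_approx_trajectories_ODE (v := fun _ => f) (fun _ => hLip) hcont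
    (fun s hs => hasDerivWithinAt_eulerPath hfine hs) hdefect
    (fun s hs => (hu s hs.1).continuousWithinAt.mono Icc_subset_Ici_self)
    (fun s hs => (hu s hs.1).mono (Ici_subset_Ici.2 hs.1)) (fun s _ => (dist_self _).le)
    (by rw [eulerPath_zero hfine.1, hu0, dist_self]) t ht
  rw [add_zero, sub_zero] at hgronwall
  exact hgronwall.trans (gronwallBound_mono le_rfl (by positivity) L.coe_nonneg ht.2)

end EulerPath

section Exponential

variable {r : ℝ}

lemma expMeasure_eq_withDensity (r : ℝ) :
    expMeasure r = volume.withDensity (exponentialPDF r) := rfl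

lemma expMeasure_Iic (hr : 0 < r) {x : ℝ} (hx : 0 ≤ x) :
    expMeasure r (Iic x) = ENNReal.ofReal (1 - exp (-(r * x))) := by
  rw [expMeasure_eq_withDensity, withDensity_apply _ measurableSet_Iic,
    lintegral_exponentialPDF_eq_antiDeriv hr, if_pos hx]

lemma expMeasure_Iic_zero (hr : 0 < r) : expMeasure r (Iic 0) = 0 := by
  simp [expMeasure_Iic hr le_rfl]

lemma expMeasure_Ioi (hr : 0 < r) {x : ℝ} (hx : 0 ≤ x) :
    expMeasure r (Ioi x) = ENNReal.ofReal (exp (-(r * x))) := by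
  have := isProbabilityMeasure_expMeasure hr
  rw [← compl_Iic, measure_compl measurableSet_Iic (measure_ne_top _ _), measure_univ,
    expMeasure_Iic hr hx, ← ENNReal.ofReal_one,
    ← ENNReal.ofReal_sub _ (sub_nonneg.2 (exp_le_one_iff.2 (neg_nonpos.2 (by positivity))))]
  congr 1
  ring

lemma measurable_exponentialPDF (r : ℝ) : Measurable (exponentialPDF r) :=
  (measurable_exponentialPDFReal r).ennreal_ofReal

lemma lintegral_exp_neg_mul_expMeasure (hr : 0 < r) :
    ∫⁻ x, ENNReal.ofReal (exp (-(r * x))) ∂expMeasure r = ENNReal.ofReal 2⁻¹ := by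
  have hdensity : ∀ x, exponentialPDF r x * ENNReal.ofReal (exp (-(r * x))) =
      ENNReal.ofReal 2⁻¹ * exponentialPDF (2 * r) x := fun x => by
    rcases lt_or_ge x 0 with hx | hx
    · simp [exponentialPDF_of_neg hx]
    · rw [exponentialPDF_of_nonneg hx, exponentialPDF_of_nonneg hx,
        ← ENNReal.ofReal_mul (by positivity), ← ENNReal.ofReal_mul (by norm_num), mul_assoc,
        ← exp_add]
      ring_nf
  rw [expMeasure_eq_withDensity, lintegral_withDensity_eq_lintegral_mul _
      (measurable_exponentialPDF r) (by fun_prop)]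
  simp only [Pi.mul_apply, hdensity]
  rw [lintegral_const_mul _ (measurable_exponentialPDF _),
    lintegral_exponentialPDF_eq_one (by positivity), mul_one]

end Exponential

lemma tendsto_exp_mul_two_inv_pow_ceil {T : ℝ} (hT : 0 < T) :
    Tendsto (fun r => exp (r * T) * 2⁻¹ ^ ⌈3 * T * r⌉₊) atTop (𝓝 0) := by
  have hlog : 0 < (3 * log 2 - 1) * T := mul_pos (by linarith [log_two_gt_d9]) hT
  refine squeeze_zero' (.of_forall fun r => by positivity) ?_
    (tendsto_exp_atBot.comp (tendsto_id.const_mul_atTop_of_neg (neg_lt_zero.2 hlog)))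
  filter_upwards [eventually_ge_atTop 0] with r hr
  have hN : 3 * T * r ≤ ⌈3 * T * r⌉₊ := Nat.le_ceil _
  rw [show (2⁻¹ : ℝ) = exp (-log 2) by rw [exp_neg, exp_log two_pos], ← exp_nat_mul, ← exp_add]
  refine exp_le_exp.2 ?_
  simp only [id]
  nlinarith [log_pos one_lt_two]

lemma tendsto_ceil_mul_exp_neg {c δ : ℝ} (hc : 0 ≤ c) (hδ : 0 < δ) :
    Tendsto (fun r => (⌈c * r⌉₊ : ℝ) * exp (-(r * δ))) atTop (𝓝 0) := by
  have hlim : Tendsto (fun r => c * (r ^ (1 : ℝ) * exp (-δ * r)) + r ^ (0 : ℝ) * exp (-δ * r))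
      atTop (𝓝 (c * 0 + 0)) :=
    ((tendsto_rpow_mul_exp_neg_mul_atTop_nhds_zero 1 δ hδ).const_mul c).add
      (tendsto_rpow_mul_exp_neg_mul_atTop_nhds_zero 0 δ hδ)
  refine squeeze_zero' (.of_forall fun r => by positivity) ?_ (by simpa using hlim)
  filter_upwards [eventually_ge_atTop 0] with r hr
  have hN : (⌈c * r⌉₊ : ℝ) ≤ c * r + 1 := (Nat.ceil_lt_add_one (by positivity)).le
  rw [mul_comm δ r]
  nlinarith [exp_pos (-(r * δ))]

section ExponentialSteps

variable {Ω : Type*} [MeasurableSpace Ω] {P : Measure Ω} [IsProbabilityMeasure P] {r : ℝ}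
  {H : ℕ → Ω → ℝ}

lemma measurable_jumpTime (hmeas : ∀ k, Measurable (H k)) (N : ℕ) :
    Measurable (jumpTime H N) :=
  Finset.measurable_sum _ fun k _ => hmeas k

lemma lintegral_exp_neg_mul_jumpTime (hr : 0 < r) (hmeas : ∀ k, Measurable (H k))
    (hindep : iIndepFun H P) (hdist : ∀ k, P.map (H k) = expMeasure r) (N : ℕ) :
    ∫⁻ ω, ENNReal.ofReal (exp (-(r * jumpTime H N ω))) ∂P = ENNReal.ofReal 2⁻¹ ^ N := by
  have hφ : Measurable fun x : ℝ => ENNReal.ofReal (exp (-(r * x))) := by fun_prop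
  induction N with
  | zero => simp [jumpTime]
  | succ n ih =>
    have hindep_n : IndepFun (jumpTime H n) (H n) P := by
      convert hindep.indepFun_finsetSum_of_notMem hmeas (s := Finset.range n) (i := n) (by simp)
      ext ω
      simp [jumpTime]
    have hsplit : ∀ ω, ENNReal.ofReal (exp (-(r * jumpTime H (n + 1) ω))) =
        ENNReal.ofReal (exp (-(r * jumpTime H n ω))) * ENNReal.ofReal (exp (-(r * H n ω))) :=
      fun ω => by
        rw [← ENNReal.ofReal_mul (exp_nonneg _), ← exp_add, jumpTime_succ]
        ring_nf
    simp_rw [hsplit]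
    rw [lintegral_mul_eq_lintegral_mul_lintegral_of_indepFun''
        (f := fun ω => ENNReal.ofReal (exp (-(r * jumpTime H n ω))))
        (g := fun ω => ENNReal.ofReal (exp (-(r * H n ω))))
        (hφ.comp (measurable_jumpTime hmeas n)).aemeasurable (hφ.comp (hmeas n)).aemeasurable
        (hindep_n.comp hφ hφ), ih,
      ← lintegral_map hφ (hmeas n), hdist n, lintegral_exp_neg_mul_expMeasure hr, pow_succ]

lemma measure_jumpTime_le (hr : 0 < r) (hmeas : ∀ k, Measurable (H k))
    (hindep : iIndepFun H P) (hdist : ∀ k, P.map (H k) = expMeasure r) (N : ℕ) (T : ℝ) :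
    P {ω | jumpTime H N ω ≤ T} ≤ ENNReal.ofReal (exp (r * T) * 2⁻¹ ^ N) := by
  have hφ : Measurable fun x : ℝ => ENNReal.ofReal (exp (-(r * x))) := by fun_prop
  set c := ENNReal.ofReal (exp (-(r * T)))
  have hc : c ≠ 0 := by simp [c, exp_pos]
  have hsub : {ω | jumpTime H N ω ≤ T} ⊆
      {ω | c ≤ ENNReal.ofReal (exp (-(r * jumpTime H N ω)))} := fun ω hω =>
    ENNReal.ofReal_le_ofReal (exp_le_exp.2 (neg_le_neg (by gcongr; exact hω)))
  have hmarkov : c * P {ω | c ≤ ENNReal.ofReal (exp (-(r * jumpTime H N ω)))} ≤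
      ∫⁻ ω, ENNReal.ofReal (exp (-(r * jumpTime H N ω))) ∂P :=
    mul_meas_ge_le_lintegral₀ (hφ.comp (measurable_jumpTime hmeas N)).aemeasurable c
  rw [lintegral_exp_neg_mul_jumpTime hr hmeas hindep hdist] at hmarkov
  calc P {ω | jumpTime H N ω ≤ T} ≤ ENNReal.ofReal 2⁻¹ ^ N / c := by
        rw [ENNReal.le_div_iff_mul_le (.inl hc) (.inl ENNReal.ofReal_ne_top), mul_comm]
        exact (mul_le_mul_of_nonneg_left (measure_mono hsub) zero_le).trans hmarkov
    _ = ENNReal.ofReal (exp (r * T) * 2⁻¹ ^ N) := by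
        rw [ENNReal.div_eq_inv_mul, ← ENNReal.ofReal_inv_of_pos (exp_pos _), ← exp_neg, neg_neg,
          ← ENNReal.ofReal_pow (by norm_num), ← ENNReal.ofReal_mul (exp_nonneg _)]

lemma measure_not_fineSteps_le (hr : 0 < r) (hmeas : ∀ k, Measurable (H k))
    (hindep : iIndepFun H P) (hdist : ∀ k, P.map (H k) = expMeasure r)
    (N : ℕ) (T : ℝ) {δ : ℝ} (hδ : 0 ≤ δ) :
    P {ω | ¬FineSteps H T δ ω} ≤
      ENNReal.ofReal (exp (r * T) * 2⁻¹ ^ N + N * exp (-(r * δ))) := by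
  have hsub : {ω | ¬FineSteps H T δ ω} ⊆ {ω | jumpTime H N ω ≤ T} ∪
      ((⋃ k ∈ Finset.range N, {ω | δ < H k ω}) ∪ ⋃ k, {ω | H k ω ≤ 0}) := fun ω hω => by
    by_contra hcon
    simp only [mem_union, mem_iUnion, mem_ofPred_eq, Finset.mem_range, not_or, not_exists,
      not_le, not_lt] at hcon
    exact hω ⟨hcon.2.2, N, hcon.1, hcon.2.1⟩
  have hlarge : ∀ k, P {ω | δ < H k ω} = ENNReal.ofReal (exp (-(r * δ))) := fun k => by
    rw [← expMeasure_Ioi hr hδ, ← hdist k, Measure.map_apply (hmeas k) measurableSet_Ioi]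
    rfl
  have hnonpos : ∀ k, P {ω | H k ω ≤ 0} = 0 := fun k => by
    rw [← expMeasure_Iic_zero hr, ← hdist k, Measure.map_apply (hmeas k) measurableSet_Iic]
    rfl
  calc P {ω | ¬FineSteps H T δ ω}
      ≤ P {ω | jumpTime H N ω ≤ T} + (∑ k ∈ Finset.range N, P {ω | δ < H k ω} +
          P (⋃ k, {ω | H k ω ≤ 0})) := by
        refine (measure_mono hsub).trans ((measure_union_le _ _).trans ?_)
        gcongr
        exact (measure_union_le _ _).trans (by gcongr; exact measure_biUnion_finset_le _ _)
    _ ≤ ENNReal.ofReal (exp (r * T) * 2⁻¹ ^ N) + (N * ENNReal.ofReal (exp (-(r * δ))) + 0) := by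
        rw [Finset.sum_congr rfl fun k _ => hlarge k, Finset.sum_const, Finset.card_range,
          nsmul_eq_mul, measure_iUnion_null hnonpos]
        gcongr
        exact measure_jumpTime_le hr hmeas hindep hdist N T
    _ = ENNReal.ofReal (exp (r * T) * 2⁻¹ ^ N + N * exp (-(r * δ))) := by
        rw [add_zero, ← ENNReal.ofReal_natCast N, ← ENNReal.ofReal_mul (Nat.cast_nonneg N),
          ← ENNReal.ofReal_add (by positivity) (by positivity)]

theorem tendsto_measure_not_fineSteps (H : ℝ → ℕ → Ω → ℝ)
    (hmeas : ∀ h : ℝ, 0 < h → ∀ k, Measurable (H h k))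
    (hindep : ∀ h : ℝ, 0 < h → iIndepFun (H h) P)
    (hdist : ∀ h : ℝ, 0 < h → ∀ k, P.map (H h k) = expMeasure h⁻¹)
    {T δ : ℝ} (hT : 0 < T) (hδ : 0 < δ) :
    Tendsto (fun h => P {ω | ¬FineSteps (H h) T δ ω}) (𝓝[>] 0) (𝓝 0) := by
  -- `N = ⌈3T/h⌉` steps: `3 log 2 > 1` makes `T_N > T` likely, and `N e^{-δ/h}` is still small.
  have hbound : Tendsto (fun r => exp (r * T) * 2⁻¹ ^ ⌈3 * T * r⌉₊ +
      ⌈3 * T * r⌉₊ * exp (-(r * δ))) atTop (𝓝 0) := by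
    simpa using (tendsto_exp_mul_two_inv_pow_ceil hT).add
      (tendsto_ceil_mul_exp_neg (by positivity) hδ)
  refine tendsto_of_tendsto_of_tendsto_of_le_of_le' tendsto_const_nhds
    (ENNReal.ofReal_zero ▸ ENNReal.tendsto_ofReal (hbound.comp tendsto_inv_nhdsGT_zero))
    (.of_forall fun _ => zero_le) ?_
  filter_upwards [self_mem_nhdsWithin] with h hh
  exact measure_not_fineSteps_le (inv_pos.2 hh) (hmeas h hh) (hindep h hh) (hdist h hh) _ T
    hδ.le

end ExponentialSteps

/-- Weak convergence of the stochastic Euler dynamics to the ODE solution as `h ↓ 0`,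
for Lipschitz `f`: for every bounded continuous functional `F` on
`C([0,∞); ℝ^d)` (compact-open topology), `𝔼[F(V_h)] → F(u)`. -/
theorem stmt8 (d : ℕ) {Ω : Type*} [MeasurableSpace Ω] (P : Measure Ω) [IsProbabilityMeasure P]
    [MeasurableSpace C(ℝ≥0, EuclideanSpace ℝ (Fin d))]
    [BorelSpace C(ℝ≥0, EuclideanSpace ℝ (Fin d))]
    (f : EuclideanSpace ℝ (Fin d) → EuclideanSpace ℝ (Fin d))
    (L : ℝ≥0) (hLip : LipschitzWith L f)
    (u0 : EuclideanSpace ℝ (Fin d))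
    -- the ODE solution `u' = f(u)`, `u(0) = u₀`, as a function and as a continuous path
    (u : ℝ → EuclideanSpace ℝ (Fin d)) (hu0 : u 0 = u0)
    (hu : ∀ t : ℝ, 0 ≤ t → HasDerivWithinAt u (f (u t)) (Set.Ici 0) t)
    (uC : C(ℝ≥0, EuclideanSpace ℝ (Fin d))) (huC : ∀ t : ℝ≥0, uC t = u t)
    -- for each `h > 0`, i.i.d. exponential timesteps with mean `h`
    (H : ℝ → ℕ → Ω → ℝ)
    (hHmeas : ∀ h : ℝ, 0 < h → ∀ k, Measurable (H h k))
    (hHindep : ∀ h : ℝ, 0 < h → iIndepFun (H h) P)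
    (hHdist : ∀ h : ℝ, 0 < h → ∀ k, Measure.map (H h k) P = expMeasure h⁻¹)
    -- the stochastic Euler dynamics, as a random continuous path
    (V : ℝ → Ω → C(ℝ≥0, EuclideanSpace ℝ (Fin d)))
    (hVmeas : ∀ h : ℝ, 0 < h → Measurable (V h))
    (hV : ∀ h : ℝ, 0 < h → ∀ ω, ∀ t : ℝ≥0, V h ω t = eulerPath f u0 (H h) (t : ℝ) ω) :
    ∀ F : C(ℝ≥0, EuclideanSpace ℝ (Fin d)) → ℝ, Continuous F → (∃ M : ℝ, ∀ x, |F x| ≤ M) →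
      Filter.Tendsto (fun h : ℝ => ∫ ω, F (V h ω) ∂P)
        (nhdsWithin 0 (Set.Ioi 0)) (nhds (F uC)) := by
  intro F hF ⟨M, hM⟩
  refine tendsto_integral_comp_of_tendsto_measure_notMem
    (eventually_nhdsWithin_of_forall fun h hh =>
      (hF.measurable.comp (hVmeas h hh)).aestronglyMeasurable)
    hM hF.continuousAt fun U hU => ?_
  obtain ⟨⟨K, ε⟩, ⟨hK, hε⟩, hKU⟩ :=
    (nhds_basis_uniformity' Metric.uniformity_basis_dist.compactConvergenceUniformity).mem_iff.1 hU
  obtain ⟨T', hT'⟩ := hK.bddAbove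
  set T : ℝ := T' + 1
  obtain ⟨δ, hδL, hδε, hδ⟩ := exists_pos_eulerErrorBound_lt L ‖f u0‖ T hε
  refine tendsto_of_tendsto_of_tendsto_of_le_of_le' tendsto_const_nhds
    (tendsto_measure_not_fineSteps H hHmeas hHindep hHdist (T := T) (by positivity) hδ)
    (.of_forall fun _ => zero_le) ?_
  filter_upwards [self_mem_nhdsWithin] with h hh
  refine measure_mono fun ω hω hfine => hω (hKU fun x hx => ?_)
  have hcont : ContinuousOn (eulerPath f u0 (H h) · ω) (Icc 0 T) :=
    ((V h ω).continuous.comp continuous_real_toNNReal).continuousOn.congr fun t ht => by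
      simp [hV h hh, ht.1]
  have hxT : (x : ℝ) ∈ Icc 0 T := ⟨x.2, by linarith [NNReal.coe_le_coe.2 (hT' hx)]⟩
  show dist (uC x) (V h ω x) < ε
  rw [huC, hV h hh, dist_comm]
  exact (dist_eulerPath_le hLip hu0 hu hδ.le hδL hfine hcont hxT).trans_lt hδε
end
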